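/- arXiv:2409.14361 — 4 statements merged into one kernel-verified Lean document; each statement's English description precedes it below -/
import Mathlib

section
/- Suppose f is a bounded analytic function on the right half-plane {z ∈ ℂ : Re z > 0} that vanishes at a set of pairwise distinct points d₁, d₂, … satisfying (i) inf_n |d_n| > 0 and (ii) Σ_{n≥1} Re(1/d_n) = ∞. Then f vanishes identically on {z ∈ ℂ : Re z > 0}. -/
open Filter

lemma sq_norm_add_conj (w d : ℂ) :
    ‖w + (starRingEnd ℂ) d‖^2 = ‖w - d‖^2 + 4 * w.re * d.re := by
  rw [Complex.sq_norm, Complex.sq_norm,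
      Complex.normSq_apply, Complex.normSq_apply]
  simp only [Complex.add_re, Complex.add_im, Complex.sub_re, Complex.sub_im,
    Complex.conj_re, Complex.conj_im]
  ring

set_option maxHeartbeats 1000000 in
lemma key_div_bound {M : ℝ} (hM : 0 ≤ M) {g : ℂ → ℂ}
    (hg : DifferentiableOn ℂ g {z : ℂ | 0 < z.re})
    (hgb : ∀ z : ℂ, 0 < z.re → ‖g z‖ ≤ M) {d : ℂ} (hd : 0 < d.re) (hgd : g d = 0) :
    ∀ z : ℂ, 0 < z.re → ‖dslope g d z * (z + (starRingEnd ℂ) d)‖ ≤ M := by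
  have hHopen : IsOpen {z : ℂ | 0 < z.re} := isOpen_lt continuous_const Complex.continuous_re
  have hhdiff : DifferentiableOn ℂ (fun w => dslope g d w * (w + (starRingEnd ℂ) d))
      {z : ℂ | 0 < z.re} :=
    ((Complex.differentiableOn_dslope (hHopen.mem_nhds hd)).mpr hg).mul
      ((differentiable_id.add_const _).differentiableOn)
  intro z hz
  have main : ∀ c : ℝ, 1 < c → ‖dslope g d z * (z + (starRingEnd ℂ) d)‖ ≤ M * c := by
    intro c hc
    have hc0 : (0:ℝ) < c := lt_trans one_pos hc
    obtain ⟨δ, hδpos, hδd, hδz, hδc⟩ :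
        ∃ δ : ℝ, 0 < δ ∧ δ ≤ d.re / 2 ∧ δ < z.re ∧ δ ≤ d.re * (c^2 - 1) / 16 := by
      refine ⟨min (d.re / 2) (min (z.re / 2) (d.re * (c^2 - 1) / 16)), ?_, min_le_left _ _,
        ?_, le_trans (min_le_right _ _) (min_le_right _ _)⟩
      · have h1 : 0 < d.re * (c^2 - 1) / 16 :=
          div_pos (mul_pos hd (by nlinarith)) (by norm_num)
        exact lt_min (by linarith) (lt_min (by linarith) h1)
      · exact lt_of_le_of_lt (le_trans (min_le_right _ _) (min_le_left _ _)) (by linarith)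
    obtain ⟨R, hRz, hRd, hRbig⟩ :
        ∃ R : ℝ, ‖z‖ < R ∧ ‖d‖ < R ∧ ‖d‖ * (c + 1) ≤ R * (c - 1) := by
      have hcd : 0 < c - 1 := by linarith
      refine ⟨‖z‖ + ‖d‖ * (c + 1) / (c - 1) + 1, ?_, ?_, ?_⟩
      · have : 0 ≤ ‖d‖ * (c + 1) / (c - 1) := by positivity
        linarith
      · have h1 : ‖d‖ ≤ ‖d‖ * (c + 1) / (c - 1) := by
          rw [le_div_iff₀ hcd]; nlinarith [norm_nonneg d]
        have h2 : (0:ℝ) ≤ ‖z‖ := norm_nonneg z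
        linarith
      · have h1 : ‖d‖ * (c + 1) / (c - 1) * (c - 1) = ‖d‖ * (c + 1) := by field_simp
        nlinarith [norm_nonneg z, norm_nonneg d]
    set U : Set ℂ := {w : ℂ | δ < w.re ∧ ‖w‖ < R} with hUdef
    have hUopen : IsOpen U :=
      (isOpen_lt continuous_const Complex.continuous_re).inter
        (isOpen_lt continuous_norm continuous_const)
    have hUbd : Bornology.IsBounded U :=
      (Metric.isBounded_ball (x := (0:ℂ)) (r := R)).subset
        (fun w hw => by simpa [Metric.mem_ball, dist_eq_norm] using hw.2)
    have hclsub : closure U ⊆ {w : ℂ | δ ≤ w.re ∧ ‖w‖ ≤ R} := by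
      apply closure_minimal
      · intro w hw; exact ⟨le_of_lt hw.1, le_of_lt hw.2⟩
      · exact (isClosed_le continuous_const Complex.continuous_re).inter
          (isClosed_le continuous_norm continuous_const)
    have hclH : closure U ⊆ {z : ℂ | 0 < z.re} :=
      fun w hw => lt_of_lt_of_le hδpos (hclsub hw).1
    have hdcc : DiffContOnCl ℂ (fun w => dslope g d w * (w + (starRingEnd ℂ) d)) U :=
      (hhdiff.mono hclH).diffContOnCl
    have hfr : ∀ w ∈ frontier U,
        ‖dslope g d w * (w + (starRingEnd ℂ) d)‖ ≤ M * c := by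
      intro w hwf
      have hwcl : w ∈ closure U := hwf.1
      have hw1 : δ ≤ w.re := (hclsub hwcl).1
      have hw2 : ‖w‖ ≤ R := (hclsub hwcl).2
      have hwH : 0 < w.re := lt_of_lt_of_le hδpos hw1
      have hwnU : w ∉ U := by rw [hUopen.frontier_eq] at hwf; exact hwf.2
      have hcases : w.re = δ ∨ ‖w‖ = R := by
        by_contra hcon
        push_neg at hcon
        exact hwnU ⟨lt_of_le_of_ne hw1 (Ne.symm hcon.1), lt_of_le_of_ne hw2 hcon.2⟩
      have hwd : w ≠ d := by
        rcases hcases with h1 | h2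
        · intro heq; rw [heq] at h1; linarith
        · intro heq; rw [heq] at h2; linarith
      have hwdne : ‖w - d‖ ≠ 0 := by
        exact norm_ne_zero_iff.mpr (sub_ne_zero.mpr hwd)
      have hwdpos : 0 < ‖w - d‖ := lt_of_le_of_ne (norm_nonneg _) (Ne.symm hwdne)
      have hratio : ‖w + (starRingEnd ℂ) d‖ ≤ c * ‖w - d‖ := by
        have hkey : ‖w + (starRingEnd ℂ) d‖^2 ≤ (c * ‖w - d‖)^2 := by
          rw [sq_norm_add_conj, mul_pow]
          rcases hcases with h1 | h2
          · have hwd2 : (d.re / 2)^2 ≤ ‖w - d‖^2 := by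
              have habs : d.re / 2 ≤ |(w - d).re| := by
                rw [Complex.sub_re, h1, abs_sub_comm]
                calc d.re / 2 ≤ d.re - δ := by linarith
                  _ ≤ |d.re - δ| := le_abs_self _
              calc (d.re/2)^2 ≤ |(w - d).re|^2 :=
                    pow_le_pow_left₀ (by linarith) habs 2
                _ = (w - d).re^2 := sq_abs _
                _ ≤ ‖w - d‖^2 := by
                    rw [Complex.sq_norm, Complex.normSq_apply]
                    nlinarith [sq_nonneg (w - d).im]
            have h4 : 4 * w.re * d.re ≤ (c^2 - 1) * ‖w - d‖^2 := by
              have e2 : 4 * δ * d.re ≤ 4 * (d.re * (c^2-1)/16) * d.re := by nlinarith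
              have e4 : (c^2-1) * (d.re/2)^2 ≤ (c^2-1) * ‖w - d‖^2 :=
                mul_le_mul_of_nonneg_left hwd2 (by nlinarith)
              rw [h1]; nlinarith
            nlinarith [sq_nonneg ‖w - d‖]
          · have hb1 : R - ‖d‖ ≤ ‖w - d‖ := by
              have h3 := norm_sub_norm_le w d
              rw [h2] at h3; linarith
            have hb2 : 4 * w.re * d.re ≤ 4 * R * ‖d‖ := by
              have hw3 : w.re ≤ ‖w‖ := Complex.re_le_norm w
              have hd3 : d.re ≤ ‖d‖ := Complex.re_le_norm d
              have hd0 : (0:ℝ) ≤ ‖d‖ := norm_nonneg d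
              nlinarith
            have hRd0 : 0 < R - ‖d‖ := by linarith
            have f1 : 0 ≤ R * (c-1) - ‖d‖ * (c+1) := by linarith
            have f2 : 0 ≤ R * (c+1) - ‖d‖ * (c-1) := by nlinarith [norm_nonneg d]
            have f3 : 0 ≤ (R * (c-1) - ‖d‖ * (c+1)) * (R * (c+1) - ‖d‖ * (c-1)) :=
              mul_nonneg f1 f2
            have hkey2 : 4 * R * ‖d‖ ≤ (c^2 - 1) * (R - ‖d‖)^2 := by nlinarith
            have f4 : (R - ‖d‖)^2 ≤ ‖w - d‖^2 := pow_le_pow_left₀ (le_of_lt hRd0) hb1 2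
            have f5 : (c^2-1) * (R - ‖d‖)^2 ≤ (c^2-1) * ‖w - d‖^2 :=
              mul_le_mul_of_nonneg_left f4 (by nlinarith)
            nlinarith
        exact (pow_le_pow_iff_left₀ (norm_nonneg _)
          (mul_nonneg (le_of_lt hc0) (norm_nonneg _)) two_ne_zero).mp hkey
      have hval : ‖dslope g d w * (w + (starRingEnd ℂ) d)‖
          = ‖g w‖ * (‖w + (starRingEnd ℂ) d‖ / ‖w - d‖) := by
        rw [dslope_of_ne g hwd, slope_def_field, hgd, sub_zero, norm_mul, norm_div]
        ring
      rw [hval]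
      have hratio' : ‖w + (starRingEnd ℂ) d‖ / ‖w - d‖ ≤ c := by
        rw [div_le_iff₀ hwdpos]; linarith
      exact mul_le_mul (hgb w hwH) hratio' (by positivity) hM
    have hzU : z ∈ closure U := subset_closure ⟨hδz, hRz⟩
    exact Complex.norm_le_of_forall_mem_frontier_norm_le hUbd hdcc hfr hzU
  have ht : Tendsto (fun c : ℝ => M * c) (nhdsWithin 1 (Set.Ioi 1)) (nhds M) := by
    have h1 : Tendsto (fun c : ℝ => M * c) (nhds (1:ℝ)) (nhds (M * 1)) :=
      (continuous_const.mul continuous_id).tendsto 1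
    rw [mul_one] at h1
    exact h1.mono_left nhdsWithin_le_nhds
  exact ge_of_tendsto ht (eventually_mem_nhdsWithin.mono fun c hc => main c hc)

lemma blaschke_prod_bound (d : ℕ → ℂ) (hmem : ∀ n, 0 < (d n).re)
    (hinj : Function.Injective d) {M : ℝ} (hM : 0 ≤ M) :
    ∀ (N : ℕ) (g : ℂ → ℂ), DifferentiableOn ℂ g {z : ℂ | 0 < z.re} →
      (∀ z : ℂ, 0 < z.re → ‖g z‖ ≤ M) → (∀ n < N, g (d n) = 0) →
      ∀ z : ℂ, 0 < z.re →
        ‖g z‖ ≤ M * ∏ n ∈ Finset.range N, (‖z - d n‖ / ‖z + (starRingEnd ℂ) (d n)‖) := by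
  intro N
  induction N with
  | zero => intro g _ hgb _ z hz; simpa using hgb z hz
  | succ N ih =>
    intro g hg hgb hvan z hz
    have hHopen : IsOpen {z : ℂ | 0 < z.re} := isOpen_lt continuous_const Complex.continuous_re
    have hD : 0 < (d N).re := hmem N
    have hgD : g (d N) = 0 := hvan N (Nat.lt_succ_self N)
    set h : ℂ → ℂ := fun w => dslope g (d N) w * (w + (starRingEnd ℂ) (d N)) with hhdef
    have hhdiff : DifferentiableOn ℂ h {z : ℂ | 0 < z.re} :=
      ((Complex.differentiableOn_dslope (hHopen.mem_nhds hD)).mpr hg).mul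
        ((differentiable_id.add_const _).differentiableOn)
    have hhb : ∀ w : ℂ, 0 < w.re → ‖h w‖ ≤ M := key_div_bound hM hg hgb hD hgD
    have hhvan : ∀ n < N, h (d n) = 0 := by
      intro n hn
      have hne : d n ≠ d N := fun e => absurd (hinj e) (Nat.ne_of_lt hn)
      have : g (d n) = 0 := hvan n (Nat.lt_succ_of_lt hn)
      simp [hhdef, dslope_of_ne g hne, slope_def_field, this, hgD]
    have hb := ih h hhdiff hhb hhvan z hz
    rw [Finset.prod_range_succ, ← mul_assoc]
    by_cases hzD : z = d N
    · rw [hzD, hgD]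
      simp only [sub_self, norm_zero, zero_div, mul_zero, norm_zero]
      positivity
    · have hsne : z - d N ≠ 0 := sub_ne_zero.mpr hzD
      have hcre : 0 < (z + (starRingEnd ℂ) (d N)).re := by
        simp only [Complex.add_re, Complex.conj_re]; linarith
      have hcne : z + (starRingEnd ℂ) (d N) ≠ 0 := by
        intro h0; rw [h0] at hcre; simp at hcre
      have hgz : ‖g z‖ = ‖h z‖ * (‖z - d N‖ / ‖z + (starRingEnd ℂ) (d N)‖) := by
        simp only [hhdef, dslope_of_ne g hzD, slope_def_field, hgD, sub_zero]
        rw [norm_mul, norm_div]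
        have h1 : ‖z - d N‖ ≠ 0 := norm_ne_zero_iff.mpr hsne
        have h2 : ‖z + (starRingEnd ℂ) (d N)‖ ≠ 0 := norm_ne_zero_iff.mpr hcne
        field_simp
      rw [hgz]
      exact mul_le_mul_of_nonneg_right hb (by positivity)

/-- A bounded analytic function on the right half-plane that vanishes at a
sequence of pairwise distinct points `d₁, d₂, …` of the half-plane with `inf |dₙ| > 0` and
`Σₙ Re(1/dₙ) = ∞` vanishes identically on the right half-plane. -/
theorem statement1 (f : ℂ → ℂ)
    (han : DifferentiableOn ℂ f {z : ℂ | 0 < z.re})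
    (hbd : ∃ C : ℝ, ∀ z : ℂ, 0 < z.re → ‖f z‖ ≤ C)
    (d : ℕ → ℂ)
    (hmem : ∀ n, 0 < (d n).re)
    (hinj : Function.Injective d)
    (hinf : ∃ ε : ℝ, 0 < ε ∧ ∀ n, ε ≤ ‖d n‖)
    (hdiv : Tendsto (fun N => ∑ n ∈ Finset.range N, ((d n)⁻¹).re) atTop atTop)
    (hvan : ∀ n, f (d n) = 0) :
    ∀ z : ℂ, 0 < z.re → f z = 0 := by
  obtain ⟨C, hC⟩ := hbd
  obtain ⟨ε, hε, hεle⟩ := hinf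
  intro z hz
  set M : ℝ := max C 0 with hMdef
  have hM : 0 ≤ M := le_max_right _ _
  have hfb : ∀ w : ℂ, 0 < w.re → ‖f w‖ ≤ M := fun w hw => le_trans (hC w hw) (le_max_left _ _)
  have hprod := fun N => blaschke_prod_bound d hmem hinj hM N f han hfb
    (fun n _ => hvan n) z hz
  set K : ℝ := ‖z‖ / ε + 1 with hKdef
  have hK : 0 < K := by positivity
  set c : ℝ := 4 * z.re / K ^ 2 with hcdef
  have hc : 0 < c := by positivity
  set t : ℕ → ℝ := fun n => ((d n)⁻¹).re with htdef
  have ht : ∀ n, t n = (d n).re / ‖d n‖ ^ 2 := by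
    intro n
    rw [htdef]
    simp only
    rw [Complex.inv_re, Complex.normSq_eq_norm_sq]
  have htpos : ∀ n, 0 < t n := by
    intro n
    rw [ht n]
    have h1 : 0 < ‖d n‖ := lt_of_lt_of_le hε (by exact hεle n)
    have h2 := hmem n
    positivity
  -- per-factor bound
  have hfac : ∀ n : ℕ, ‖z - d n‖ / ‖z + (starRingEnd ℂ) (d n)‖
      ≤ Real.exp (-(c / 2) * t n) := by
    intro n
    have hdn : 0 < ‖d n‖ := lt_of_lt_of_le hε (by exact hεle n)
    have hcre : 0 < (z + (starRingEnd ℂ) (d n)).re := by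
      simp only [Complex.add_re, Complex.conj_re]
      have := hmem n; linarith
    have hcne : z + (starRingEnd ℂ) (d n) ≠ 0 := by
      intro h0; rw [h0] at hcre; simp at hcre
    have hA : 0 < ‖z + (starRingEnd ℂ) (d n)‖ := norm_pos_iff.mpr hcne
    -- A ≤ K * ‖d n‖
    have hAle : ‖z + (starRingEnd ℂ) (d n)‖ ≤ K * ‖d n‖ := by
      have h1 : ‖z + (starRingEnd ℂ) (d n)‖ ≤ ‖z‖ + ‖d n‖ := by
        calc ‖z + (starRingEnd ℂ) (d n)‖ ≤ ‖z‖ + ‖(starRingEnd ℂ) (d n)‖ := norm_add_le _ _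
          _ = ‖z‖ + ‖d n‖ := by rw [RCLike.norm_conj]
      have h2 : ‖z‖ ≤ ‖z‖ / ε * ‖d n‖ := by
        have : ε ≤ ‖d n‖ := by exact hεle n
        calc ‖z‖ = ‖z‖ / ε * ε := by field_simp
          _ ≤ ‖z‖ / ε * ‖d n‖ := by
              apply mul_le_mul_of_nonneg_left this (by positivity)
      calc ‖z + (starRingEnd ℂ) (d n)‖ ≤ ‖z‖ + ‖d n‖ := h1
        _ ≤ ‖z‖ / ε * ‖d n‖ + ‖d n‖ := by linarith
        _ = K * ‖d n‖ := by rw [hKdef]; ring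
    -- squared ratio identity
    have hsq : (‖z - d n‖ / ‖z + (starRingEnd ℂ) (d n)‖) ^ 2
        = 1 - 4 * z.re * (d n).re / ‖z + (starRingEnd ℂ) (d n)‖ ^ 2 := by
      have hid := sq_norm_add_conj z (d n)
      have hA2 : (0:ℝ) < ‖z + (starRingEnd ℂ) (d n)‖ ^ 2 := by positivity
      have hsub : ‖z - d n‖ ^ 2
          = ‖z + (starRingEnd ℂ) (d n)‖ ^ 2 - 4 * z.re * (d n).re := by linarith
      rw [div_pow, hsub, sub_div, div_self (ne_of_gt hA2)]
    -- c * t n ≤ 4 z.re (d n).re / A²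
    have hct : c * t n ≤ 4 * z.re * (d n).re / ‖z + (starRingEnd ℂ) (d n)‖ ^ 2 := by
      have he : c * t n = 4 * z.re * (d n).re / (K * ‖d n‖) ^ 2 := by
        rw [hcdef, ht n]; field_simp
      rw [he]
      have hAA : ‖z + (starRingEnd ℂ) (d n)‖ ^ 2 ≤ (K * ‖d n‖) ^ 2 :=
        pow_le_pow_left₀ (le_of_lt hA) hAle 2
      have hnum : 0 ≤ 4 * z.re * (d n).re := by have := hmem n; positivity
      exact div_le_div_of_nonneg_left hnum (by positivity) hAA
    -- combine
    have hsqle : (‖z - d n‖ / ‖z + (starRingEnd ℂ) (d n)‖) ^ 2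
        ≤ (Real.exp (-(c / 2) * t n)) ^ 2 := by
      have h1 : (‖z - d n‖ / ‖z + (starRingEnd ℂ) (d n)‖) ^ 2 ≤ 1 - c * t n := by
        rw [hsq]; linarith
      have h2 : 1 - c * t n ≤ Real.exp (-(c * t n)) := by
        have := Real.add_one_le_exp (-(c * t n)); linarith
      have h3 : Real.exp (-(c * t n)) = (Real.exp (-(c / 2) * t n)) ^ 2 := by
        rw [sq, ← Real.exp_add]; congr 1; ring
      linarith [h3 ▸ h2]
    exact (pow_le_pow_iff_left₀ (by positivity) (le_of_lt (Real.exp_pos _)) two_ne_zero).mp hsqle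
  -- product bound
  have hPN : ∀ N : ℕ, ‖f z‖ ≤ M * Real.exp (-(c / 2) * ∑ n ∈ Finset.range N, t n) := by
    intro N
    refine le_trans (hprod N) (mul_le_mul_of_nonneg_left ?_ hM)
    calc ∏ n ∈ Finset.range N, (‖z - d n‖ / ‖z + (starRingEnd ℂ) (d n)‖)
        ≤ ∏ n ∈ Finset.range N, Real.exp (-(c / 2) * t n) := by
          apply Finset.prod_le_prod (fun n _ => by positivity) (fun n _ => hfac n)
      _ = Real.exp (∑ n ∈ Finset.range N, -(c / 2) * t n) := (Real.exp_sum _ _).symm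
      _ = Real.exp (-(c / 2) * ∑ n ∈ Finset.range N, t n) := by
          rw [← Finset.mul_sum]
  -- take limit
  have hlim : Tendsto (fun N => M * Real.exp (-(c / 2) * ∑ n ∈ Finset.range N, t n))
      atTop (nhds 0) := by
    have h1 : Tendsto (fun N => -(c / 2) * ∑ n ∈ Finset.range N, t n) atTop atBot :=
      Tendsto.const_mul_atTop_of_neg (by linarith) hdiv
    have h2 := (Real.tendsto_exp_atBot).comp h1
    have h3 := h2.const_mul M
    simpa using h3
  have : ‖f z‖ ≤ 0 := ge_of_tendsto hlim (Eventually.of_forall hPN)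
  exact norm_le_zero_iff.mp this
end

section
/- Let a, b, c, d be non-negative integers with a + b − c − d = λ, and let δ be a positive integer. Define H(z) = [Γ((z+a)/(2δ))·Γ((z+b)/(2δ))] / [Γ((z+c)/(2δ))·Γ((z+d)/(2δ))]. Then H is a rational function of z (i.e., agrees with a quotient of two polynomials wherever both are defined) if and only if 2δ divides λ and 2δ divides at least one of the numbers a − c or a − d. -/
open Polynomial Finset
open scoped Classical

namespace St2

/-! ### Gamma function helpers -/

lemma gamma_ne_neg_nat {w : ℂ} (hw : Complex.Gamma w ≠ 0) (n : ℕ) : w ≠ -n := by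
  intro h; exact hw (h ▸ Complex.Gamma_neg_nat_eq_zero n)

lemma gamma_shift {w : ℂ} (hw : Complex.Gamma w ≠ 0) (n : ℕ) :
    Complex.Gamma (w + n) = (∏ j ∈ Finset.range n, (w + j)) * Complex.Gamma w := by
  induction n with
  | zero => simp
  | succ n ih =>
    have h1 : w + n ≠ 0 := by
      have := gamma_ne_neg_nat hw n
      intro h; exact this (by linear_combination h)
    have h2 : Complex.Gamma (w + (n+1 : ℕ)) = (w + n) * Complex.Gamma (w + n) := by
      push_cast
      rw [show w + ((n : ℂ) + 1) = (w + n) + 1 by ring, Complex.Gamma_add_one _ h1]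
    rw [h2, ih, Finset.prod_range_succ]; ring

/-! ### cocountable sets and polynomials -/

lemma uncountable_C : ¬ (Set.univ : Set ℂ).Countable := by
  rw [Set.countable_univ_iff]
  intro h
  have : Countable ℝ := (Complex.ofReal_injective).countable
  exact Cardinal.not_countable_real (Set.countable_univ_iff.mpr this)

lemma compl_infinite {S : Set ℂ} (hS : S.Countable) : Sᶜ.Infinite := by
  intro hfin
  exact uncountable_C (by simpa using hS.union hfin.countable)

lemma exists_notin {S : Set ℂ} (hS : S.Countable) : ∃ z, z ∉ S :=
  (compl_infinite hS).nonempty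

lemma poly_eq_of_cocount {p q : ℂ[X]} {S : Set ℂ} (hS : S.Countable)
    (h : ∀ z ∉ S, p.eval z = q.eval z) : p = q := by
  have h0 : p - q = 0 := by
    refine eq_zero_of_infinite_isRoot _ ?_
    refine (compl_infinite hS).mono fun z hz => ?_
    simp [IsRoot, sub_eq_zero, h z hz]
  linear_combination h0

lemma rootMult_comp (p : ℂ[X]) (t z : ℂ) :
    (p.comp (X + C t)).rootMultiplicity z = p.rootMultiplicity (z + t) := by
  rw [rootMultiplicity_eq_natTrailingDegree, rootMultiplicity_eq_natTrailingDegree,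
    ← taylor_apply, ← taylor_apply, ← taylor_apply, taylor_taylor]

lemma comp_shift_ne_zero {Q : ℂ[X]} (t : ℂ) (hQ : Q ≠ 0) : Q.comp (X + C t) ≠ 0 := by
  intro h
  apply hQ
  have h2 := congrArg (fun r : ℂ[X] => r.comp (X + C (-t))) h
  simpa [comp_assoc, add_comp] using h2

/-! ### integer counting lemmas -/

lemma ind_sum (M : ℤ) (hM : 0 < M) (n₀ t : ℤ) (K : ℕ) :
    ∑ k ∈ Finset.range K, (if n₀ + (k : ℤ) * M = t then (1:ℤ) else 0)
      = if ∃ j : ℤ, 0 ≤ j ∧ j < K ∧ n₀ + j * M = t then 1 else 0 := by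
  by_cases h : ∃ j : ℤ, 0 ≤ j ∧ j < K ∧ n₀ + j * M = t
  · obtain ⟨j, hj0, hjK, hjt⟩ := h
    rw [if_pos ⟨j, hj0, hjK, hjt⟩]
    have hjn : ((j.toNat : ℤ)) = j := Int.toNat_of_nonneg hj0
    have hmem : j.toNat ∈ Finset.range K := by
      rw [Finset.mem_range]; omega
    have h2 : ∀ k ∈ Finset.range K,
        (if n₀ + (k : ℤ) * M = t then (1:ℤ) else 0) = if k = j.toNat then 1 else 0 := by
      intro k _
      congr 1
      apply propext
      constructor
      · intro hk
        have h3 : (k : ℤ) * M = j * M := by omega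
        have := mul_right_cancel₀ (ne_of_gt hM) h3
        omega
      · intro hk; subst hk; rw [hjn]; exact hjt
    rw [Finset.sum_congr rfl h2, Finset.sum_ite_eq' _ _ _, if_pos hmem]
  · rw [if_neg h]
    refine Finset.sum_eq_zero fun k hk => ?_
    rw [Finset.mem_range] at hk
    rw [if_neg]
    intro hkt
    exact h ⟨k, by omega, by omega, hkt⟩

lemma cover (M : ℤ) (hM : 0 < M) (N : ℕ) (x y : ℤ) (hx : 0 ≤ x) (hy : 0 ≤ y)
    (hxN : x ≤ N) (hyN : y ≤ N) :
    (∃ j : ℤ, 0 ≤ j ∧ j < ((2 * N + 1 : ℕ) : ℤ) ∧ (-x - N * M) + j * M = -y) ↔ M ∣ (x - y) := by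
  constructor
  · rintro ⟨j, _, _, hj⟩
    exact ⟨j - N, by linear_combination -hj⟩
  · rintro ⟨s, hs⟩
    have hM1 : 1 ≤ M := hM
    have hsb : -(N:ℤ) ≤ s ∧ s ≤ N := by
      constructor <;> nlinarith [hs]
    exact ⟨N + s, by omega, by push_cast; omega, by linear_combination -hs⟩

lemma tele (M : ℤ) (u v : ℤ → ℤ) (huv : ∀ n, u (n + M) - u n = v n) (n₀ : ℤ) (K : ℕ) :
    ∑ k ∈ Finset.range K, v (n₀ + (k : ℤ) * M) = u (n₀ + K * M) - u n₀ := by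
  have h := Finset.sum_range_sub (fun k : ℕ => u (n₀ + (k : ℤ) * M)) K
  rw [show (n₀ + (0:ℕ) * M) = n₀ by push_cast; ring] at h
  rw [← h]
  refine Finset.sum_congr rfl fun k _ => ?_
  rw [← huv (n₀ + (k:ℤ) * M)]
  congr 1
  push_cast; ring

lemma count_lemma (M : ℤ) (hM : 0 < M) (a b c d : ℤ)
    (ha : 0 ≤ a) (hb : 0 ≤ b) (hc : 0 ≤ c) (hd : 0 ≤ d)
    (u : ℤ → ℤ) (B : ℤ) (hu : ∀ n : ℤ, B ≤ |n| → u n = 0)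
    (huv : ∀ n : ℤ, u (n + M) - u n =
      ((if n = -c then (1:ℤ) else 0) + (if n = -d then 1 else 0))
      - ((if n = -a then 1 else 0) + (if n = -b then 1 else 0))) :
    M ∣ (a + b - c - d) ∧ (M ∣ (a - c) ∨ M ∣ (a - d)) := by
  have hM1 : (1:ℤ) ≤ M := hM
  obtain ⟨N, hNd⟩ : ∃ N : ℕ, |B| + a + b + c + d + 1 = (N:ℤ) :=
    ⟨_, (Int.toNat_of_nonneg (by positivity)).symm⟩
  have haN : a ≤ (N:ℤ) := by have := abs_nonneg B; omega
  have hbN : b ≤ (N:ℤ) := by have := abs_nonneg B; omega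
  have hcN : c ≤ (N:ℤ) := by have := abs_nonneg B; omega
  have hdN : d ≤ (N:ℤ) := by have := abs_nonneg B; omega
  have hBN : B + 1 ≤ (N:ℤ) := by have := le_abs_self B; omega
  have key : ∀ x : ℤ, 0 ≤ x → x ≤ a + b + c + d → x ≤ (N:ℤ) →
      ((if M ∣ x - c then (1:ℤ) else 0) + (if M ∣ x - d then 1 else 0))
      = ((if M ∣ x - a then 1 else 0) + (if M ∣ x - b then 1 else 0)) := by
    intro x hx0 hxS hxN
    set K : ℕ := 2*N+1 with hK
    set n₀ : ℤ := -x - N*M with hn₀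
    have hNM : (N:ℤ) ≤ (N:ℤ)*M := by nlinarith [Nat.cast_nonneg (α := ℤ) N]
    have h0 : u n₀ = 0 := by
      apply hu
      rw [abs_of_nonpos (by omega)]
      omega
    have hKend : u (n₀ + (K:ℤ)*M) = 0 := by
      apply hu
      have he : n₀ + (K:ℤ)*M = -x + ((N:ℤ)+1)*M := by push_cast [hK, hn₀]; ring
      have h1 : (N:ℤ) + 1 ≤ ((N:ℤ)+1)*M := by nlinarith [Nat.cast_nonneg (α := ℤ) N]
      rw [he, abs_of_nonneg (by omega)]
      have := le_abs_self B
      omega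
    have htele := tele M u _ (fun n => huv n) n₀ K
    rw [h0, hKend, sub_zero] at htele
    have hsplit : ∑ k ∈ Finset.range K,
        (((if n₀ + (k:ℤ)*M = -c then (1:ℤ) else 0) + (if n₀ + (k:ℤ)*M = -d then 1 else 0))
        - ((if n₀ + (k:ℤ)*M = -a then 1 else 0) + (if n₀ + (k:ℤ)*M = -b then 1 else 0)))
        = ((if M ∣ x - c then (1:ℤ) else 0) + (if M ∣ x - d then 1 else 0))
          - ((if M ∣ x - a then 1 else 0) + (if M ∣ x - b then 1 else 0)) := by
      rw [Finset.sum_sub_distrib, Finset.sum_add_distrib, Finset.sum_add_distrib,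
        ind_sum M hM _ _ K, ind_sum M hM _ _ K, ind_sum M hM _ _ K, ind_sum M hM _ _ K]
      congr 1
      · congr 1
        · simp only [hK, hn₀, cover M hM N x c hx0 hc hxN hcN]
        · simp only [hK, hn₀, cover M hM N x d hx0 hd hxN hdN]
      · congr 1
        · simp only [hK, hn₀, cover M hM N x a hx0 ha hxN haN]
        · simp only [hK, hn₀, cover M hM N x b hx0 hb hxN hbN]
    rw [hsplit] at htele
    omega
  have Ea := key a ha (by omega) haN
  have Eb := key b hb (by omega) hbN
  rw [if_pos (by simp : M ∣ a - a)] at Ea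
  rw [if_pos (by simp : M ∣ b - b)] at Eb
  have hsymm : (M ∣ b - a) ↔ (M ∣ a - b) := by
    constructor <;> intro h <;> · have := h.neg_right; simpa using this
  have dsub : ∀ u v w : ℤ, M ∣ u → M ∣ v → u - v = w → M ∣ w := by
    rintro u v w h1 h2 rfl; exact dvd_sub h1 h2
  have dadd : ∀ u v w : ℤ, M ∣ u → M ∣ v → u + v = w → M ∣ w := by
    rintro u v w h1 h2 rfl; exact dvd_add h1 h2
  by_cases h1 : M ∣ a - c
  · refine ⟨?_, Or.inl h1⟩
    by_cases h2 : M ∣ b - d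
    · exact dadd _ _ _ h1 h2 (by ring)
    · rw [if_neg h2] at Eb
      have h3 : M ∣ b - c := by
        by_contra h3
        rw [if_neg h3] at Eb
        by_cases h4 : M ∣ b - a <;> simp [h4] at Eb
      have hab : M ∣ a - b := dsub _ _ _ h1 h3 (by ring)
      rw [if_pos h1, if_pos hab] at Ea
      have had : M ∣ a - d := by
        by_contra h4; rw [if_neg h4] at Ea; omega
      exact dadd _ _ _ had h3 (by ring)
  · rw [if_neg h1] at Ea
    have had : M ∣ a - d := by
      by_contra h4
      rw [if_neg h4] at Ea
      by_cases h5 : M ∣ a - b <;> simp [h5] at Ea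
    refine ⟨?_, Or.inr had⟩
    have hab : ¬ M ∣ a - b := by
      intro h5
      rw [if_pos had, if_pos h5] at Ea; omega
    have h2 : ¬ M ∣ b - d := by
      intro h2
      exact hab (dsub _ _ _ had h2 (by ring))
    rw [if_neg h2, if_neg (fun h => hab (hsymm.mp h))] at Eb
    have hbc : M ∣ b - c := by
      by_contra h3; rw [if_neg h3] at Eb; omega
    exact dadd _ _ _ had hbc (by ring)

/-! ### the pair lemma for the backward direction -/

lemma pair (δ : ℕ) (hδ : 0 < δ) (x y : ℕ) (h : (2*(δ:ℤ)) ∣ (x:ℤ) - y) :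
    ∃ p q : Polynomial ℂ, q ≠ 0 ∧ ∀ z : ℂ,
      Complex.Gamma ((z + x) / (2 * δ)) ≠ 0 → Complex.Gamma ((z + y) / (2 * δ)) ≠ 0 →
      q.eval z ≠ 0 ∧
      Complex.Gamma ((z + x) / (2 * δ)) * q.eval z
        = p.eval z * Complex.Gamma ((z + y) / (2 * δ)) := by
  have hmC : (2 * (δ:ℂ)) ≠ 0 := by
    simp only [ne_eq, mul_eq_zero]
    push_neg
    exact ⟨two_ne_zero, Nat.cast_ne_zero.mpr hδ.ne'⟩
  have hδC : (δ:ℂ) ≠ 0 := Nat.cast_ne_zero.mpr hδ.ne'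
  obtain ⟨s, hs⟩ := h
  rcases le_or_gt 0 s with hs0 | hs0
  · -- x = y + n * 2δ
    obtain ⟨n, rfl⟩ : ∃ n : ℕ, (n : ℤ) = s := ⟨s.toNat, Int.toNat_of_nonneg hs0⟩
    have hxy : (x:ℂ) = y + n * (2 * δ) := by
      have : (x:ℤ) = y + n * (2 * δ) := by linear_combination hs
      calc (x:ℂ) = (((x:ℤ)):ℂ) := by push_cast; ring
        _ = ((((y:ℤ) + n * (2*δ)):ℤ):ℂ) := by rw [← this]
        _ = y + n * (2 * δ) := by push_cast; ring
    refine ⟨∏ j ∈ Finset.range n, (X + C ((y:ℂ) + j * (2 * δ))), C ((2*(δ:ℂ)) ^ n), ?_, ?_⟩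
    · simp only [ne_eq, C_eq_zero]
      exact pow_ne_zero _ hmC
    · intro z hx hy
      refine ⟨by simpa using pow_ne_zero n hmC, ?_⟩
      have harg : (z + x) / (2 * δ) = (z + y) / (2 * (δ:ℂ)) + n := by
        rw [hxy]; field_simp; ring
      rw [harg, gamma_shift hy n]
      simp only [eval_C, eval_prod, eval_add, eval_X]
      rw [show ((2*(δ:ℂ)) ^ n) = ∏ j ∈ Finset.range n, (2*(δ:ℂ)) from by rw [Finset.prod_const, Finset.card_range],
        mul_comm (∏ j ∈ Finset.range n, ((z + y) / (2 * (δ:ℂ)) + j)) (Complex.Gamma _),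
        mul_assoc, ← Finset.prod_mul_distrib]
      rw [mul_comm]
      congr 1
      refine Finset.prod_congr rfl fun j _ => ?_
      field_simp
      ring
  · -- y = x + n * 2δ
    obtain ⟨n, hn⟩ : ∃ n : ℕ, (n : ℤ) = -s := ⟨(-s).toNat, Int.toNat_of_nonneg (by omega)⟩
    have hxy : (y:ℂ) = x + n * (2 * δ) := by
      have h2 : (y:ℤ) = x + n * (2 * δ) := by
        linear_combination -hs - 2*(δ:ℤ)*hn
      calc (y:ℂ) = (((y:ℤ)):ℂ) := by push_cast; ring
        _ = ((((x:ℤ) + n * (2*δ)):ℤ):ℂ) := by rw [← h2]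
        _ = x + n * (2 * δ) := by push_cast; ring
    refine ⟨C ((2*(δ:ℂ)) ^ n), ∏ j ∈ Finset.range n, (X + C ((x:ℂ) + j * (2 * δ))), ?_, ?_⟩
    · exact Finset.prod_ne_zero_iff.mpr fun j _ => X_add_C_ne_zero _
    · intro z hx hy
      have hfac : ∀ j : ℕ, z + ((x:ℂ) + j * (2 * δ)) ≠ 0 := by
        intro j hj
        have hzx : (z + x) / (2 * (δ:ℂ)) = -j := by
          rw [div_eq_iff hmC]
          linear_combination hj
        exact gamma_ne_neg_nat hx j hzx
      have hqz : (∏ j ∈ Finset.range n, (X + C ((x:ℂ) + j * (2 * δ)))).eval z ≠ 0 := by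
        simp only [eval_prod, eval_add, eval_X, eval_C]
        exact Finset.prod_ne_zero_iff.mpr fun j _ => hfac j
      refine ⟨hqz, ?_⟩
      have harg : (z + y) / (2 * δ) = (z + x) / (2 * (δ:ℂ)) + n := by
        rw [hxy]; field_simp; ring
      rw [harg, gamma_shift hx n]
      simp only [eval_C, eval_prod, eval_add, eval_X]
      rw [show ((2*(δ:ℂ)) ^ n) = ∏ j ∈ Finset.range n, (2*(δ:ℂ)) from by rw [Finset.prod_const, Finset.card_range]]
      rw [show Complex.Gamma ((z + x) / (2 * (δ:ℂ))) *
            ∏ j ∈ Finset.range n, (z + ((x:ℂ) + j * (2 * δ)))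
          = (∏ j ∈ Finset.range n, (z + ((x:ℂ) + j * (2 * δ)))) *
            Complex.Gamma ((z + x) / (2 * (δ:ℂ))) from mul_comm _ _]
      rw [← mul_assoc, ← Finset.prod_mul_distrib]
      congr 1
      refine Finset.prod_congr rfl fun j _ => ?_
      field_simp
      ring

end St2


/-- Let `a, b, c, d` be non-negative integers with `a + b - c - d = λ` and let
`δ` be a positive integer.  The function
`H(z) = Γ((z+a)/(2δ))Γ((z+b)/(2δ)) / (Γ((z+c)/(2δ))Γ((z+d)/(2δ)))`
is rational (i.e. agrees with a quotient of two polynomials wherever both are defined) if and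
only if `2δ` divides `λ` and `2δ` divides one of `a - c` or `a - d`. -/
theorem statement2 (a b c d : ℕ) (lam : ℤ) (hlam : (a : ℤ) + b - c - d = lam)
    (δ : ℕ) (hδ : 0 < δ) :
    (∃ P Q : Polynomial ℂ, Q ≠ 0 ∧ ∀ z : ℂ,
        Complex.Gamma ((z + a) / (2 * δ)) ≠ 0 →
        Complex.Gamma ((z + b) / (2 * δ)) ≠ 0 →
        Complex.Gamma ((z + c) / (2 * δ)) ≠ 0 →
        Complex.Gamma ((z + d) / (2 * δ)) ≠ 0 →
        Q.eval z ≠ 0 →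
        Complex.Gamma ((z + a) / (2 * δ)) * Complex.Gamma ((z + b) / (2 * δ)) /
          (Complex.Gamma ((z + c) / (2 * δ)) * Complex.Gamma ((z + d) / (2 * δ)))
          = P.eval z / Q.eval z) ↔
      ((2 * δ : ℤ) ∣ lam ∧ ((2 * δ : ℤ) ∣ ((a : ℤ) - c) ∨ (2 * δ : ℤ) ∣ ((a : ℤ) - d))) := by
  open St2 Polynomial in
  have hmC : (2 * (δ:ℂ)) ≠ 0 := by
    have hδ' : (δ:ℂ) ≠ 0 := Nat.cast_ne_zero.mpr hδ.ne'
    simp [hδ']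
  constructor
  · rintro ⟨P, Q, hQ, hPQ⟩
    have hS1 : ∀ x : ℂ, {z : ℂ | Complex.Gamma ((z + x) / (2 * (δ:ℂ))) = 0}.Countable := by
      intro x
      refine Set.Countable.mono ?_ (Set.countable_range fun n : ℕ => -((2*(δ:ℂ)) * n) - x)
      intro z hz
      rw [Set.mem_setOf_eq, Complex.Gamma_eq_zero_iff] at hz
      obtain ⟨n, hn⟩ := hz
      rw [div_eq_iff hmC] at hn
      exact ⟨n, by linear_combination -hn⟩
    have hQ0 : {z : ℂ | Q.eval z = 0}.Countable := (Polynomial.finite_setOf_isRoot hQ).countable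
    have hQ1 : {z : ℂ | Q.eval (z + 2 * (δ:ℂ)) = 0}.Countable := by
      have he : {z : ℂ | Q.eval (z + 2 * (δ:ℂ)) = 0}
          = (fun z => z + 2 * (δ:ℂ)) ⁻¹' {z : ℂ | Q.eval z = 0} := rfl
      rw [he]
      exact hQ0.preimage (add_left_injective _)
    set S : Set ℂ :=
      {z : ℂ | Complex.Gamma ((z + (a:ℂ)) / (2 * (δ:ℂ))) = 0} ∪
      {z : ℂ | Complex.Gamma ((z + (b:ℂ)) / (2 * (δ:ℂ))) = 0} ∪
      {z : ℂ | Complex.Gamma ((z + (c:ℂ)) / (2 * (δ:ℂ))) = 0} ∪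
      {z : ℂ | Complex.Gamma ((z + (d:ℂ)) / (2 * (δ:ℂ))) = 0} ∪
      {z : ℂ | Complex.Gamma ((z + ((a:ℂ) + 2 * (δ:ℂ))) / (2 * (δ:ℂ))) = 0} ∪
      {z : ℂ | Complex.Gamma ((z + ((b:ℂ) + 2 * (δ:ℂ))) / (2 * (δ:ℂ))) = 0} ∪
      {z : ℂ | Complex.Gamma ((z + ((c:ℂ) + 2 * (δ:ℂ))) / (2 * (δ:ℂ))) = 0} ∪
      {z : ℂ | Complex.Gamma ((z + ((d:ℂ) + 2 * (δ:ℂ))) / (2 * (δ:ℂ))) = 0} ∪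
      {z : ℂ | Q.eval z = 0} ∪ {z : ℂ | Q.eval (z + 2 * (δ:ℂ)) = 0} with hSdef
    have hSc : S.Countable := by
      refine (((((((((hS1 _).union (hS1 _)).union (hS1 _)).union (hS1 _)).union
        (hS1 _)).union (hS1 _)).union (hS1 _)).union (hS1 _)).union hQ0).union hQ1
    have hpoint : ∀ z ∉ S,
        (P.comp (X + C (2 * (δ:ℂ))) * Q * ((X + C (c:ℂ)) * (X + C (d:ℂ)))).eval z
        = (P * Q.comp (X + C (2 * (δ:ℂ))) * ((X + C (a:ℂ)) * (X + C (b:ℂ)))).eval z := by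
      intro z hz
      simp only [hSdef, Set.mem_union, Set.mem_setOf_eq, not_or] at hz
      obtain ⟨⟨⟨⟨⟨⟨⟨⟨⟨hga, hgb⟩, hgc⟩, hgd⟩, hga'⟩, hgb'⟩, hgc'⟩, hgd'⟩, hq0⟩, hq1⟩ := hz
      have sga : Complex.Gamma ((z + 2 * (δ:ℂ) + a) / (2 * (δ:ℂ))) ≠ 0 := by
        rwa [show z + 2 * (δ:ℂ) + a = z + ((a:ℂ) + 2 * (δ:ℂ)) by ring]
      have sgb : Complex.Gamma ((z + 2 * (δ:ℂ) + b) / (2 * (δ:ℂ))) ≠ 0 := by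
        rwa [show z + 2 * (δ:ℂ) + b = z + ((b:ℂ) + 2 * (δ:ℂ)) by ring]
      have sgc : Complex.Gamma ((z + 2 * (δ:ℂ) + c) / (2 * (δ:ℂ))) ≠ 0 := by
        rwa [show z + 2 * (δ:ℂ) + c = z + ((c:ℂ) + 2 * (δ:ℂ)) by ring]
      have sgd : Complex.Gamma ((z + 2 * (δ:ℂ) + d) / (2 * (δ:ℂ))) ≠ 0 := by
        rwa [show z + 2 * (δ:ℂ) + d = z + ((d:ℂ) + 2 * (δ:ℂ)) by ring]
      have h1 := hPQ z hga hgb hgc hgd hq0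
      have h2 := hPQ (z + 2 * (δ:ℂ)) sga sgb sgc sgd hq1
      have hrec : ∀ x : ℂ, Complex.Gamma ((z + x) / (2 * (δ:ℂ))) ≠ 0 →
          Complex.Gamma ((z + 2 * (δ:ℂ) + x) / (2 * (δ:ℂ)))
            = ((z + x) / (2 * (δ:ℂ))) * Complex.Gamma ((z + x) / (2 * (δ:ℂ))) := by
        intro x hx
        rw [show (z + 2 * (δ:ℂ) + x) / (2 * (δ:ℂ)) = (z + x)/(2 * (δ:ℂ)) + 1 by
          rw [add_div, add_div, add_div, div_self hmC]; ring]
        exact Complex.Gamma_add_one _ (fun h => hx (by rw [h, Complex.Gamma_zero]))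
      rw [hrec a hga, hrec b hgb, hrec c hgc, hrec d hgd] at h2
      have hwc : (z + (c:ℂ)) / (2 * (δ:ℂ)) ≠ 0 :=
        fun h => hgc (by rw [h, Complex.Gamma_zero])
      have hwd : (z + (d:ℂ)) / (2 * (δ:ℂ)) ≠ 0 :=
        fun h => hgd (by rw [h, Complex.Gamma_zero])
      have e1 := (div_eq_div_iff
        (mul_ne_zero (mul_ne_zero hwc hgc) (mul_ne_zero hwd hgd)) hq1).mp h2
      have e2 := (div_eq_div_iff (mul_ne_zero hgc hgd) hq0).mp h1
      have key : P.eval (z + 2 * (δ:ℂ)) * Q.eval z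
            * ((z + (c:ℂ)) / (2 * (δ:ℂ)) * ((z + (d:ℂ)) / (2 * (δ:ℂ))))
            * (Complex.Gamma ((z + (c:ℂ)) / (2 * (δ:ℂ)))
               * Complex.Gamma ((z + (d:ℂ)) / (2 * (δ:ℂ))))
          = P.eval z * Q.eval (z + 2 * (δ:ℂ))
            * ((z + (a:ℂ)) / (2 * (δ:ℂ)) * ((z + (b:ℂ)) / (2 * (δ:ℂ))))
            * (Complex.Gamma ((z + (c:ℂ)) / (2 * (δ:ℂ)))
               * Complex.Gamma ((z + (d:ℂ)) / (2 * (δ:ℂ)))) := by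
        linear_combination (-(Q.eval z)) * e1
          + ((z + (a:ℂ)) / (2 * (δ:ℂ))) * ((z + (b:ℂ)) / (2 * (δ:ℂ)))
            * (Q.eval (z + 2 * (δ:ℂ))) * e2
      have key2 := mul_right_cancel₀ (mul_ne_zero hgc hgd) key
      simp only [eval_mul, eval_comp, eval_add, eval_X, eval_C]
      rw [show z + (a:ℂ) = (z + (a:ℂ)) / (2 * (δ:ℂ)) * (2 * (δ:ℂ)) from
          (div_mul_cancel₀ _ hmC).symm,
        show z + (b:ℂ) = (z + (b:ℂ)) / (2 * (δ:ℂ)) * (2 * (δ:ℂ)) from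
          (div_mul_cancel₀ _ hmC).symm,
        show z + (c:ℂ) = (z + (c:ℂ)) / (2 * (δ:ℂ)) * (2 * (δ:ℂ)) from
          (div_mul_cancel₀ _ hmC).symm,
        show z + (d:ℂ) = (z + (d:ℂ)) / (2 * (δ:ℂ)) * (2 * (δ:ℂ)) from
          (div_mul_cancel₀ _ hmC).symm]
      linear_combination (2 * (δ:ℂ))^2 * key2
    have heq : P.comp (X + C (2 * (δ:ℂ))) * Q * ((X + C (c:ℂ)) * (X + C (d:ℂ)))
        = P * Q.comp (X + C (2 * (δ:ℂ))) * ((X + C (a:ℂ)) * (X + C (b:ℂ))) :=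
      poly_eq_of_cocount hSc hpoint
    have hP0 : P ≠ 0 := by
      obtain ⟨z, hz⟩ := exists_notin hSc
      simp only [hSdef, Set.mem_union, Set.mem_setOf_eq, not_or] at hz
      obtain ⟨⟨⟨⟨⟨⟨⟨⟨⟨hga, hgb⟩, hgc⟩, hgd⟩, -⟩, -⟩, -⟩, -⟩, hq0⟩, -⟩ := hz
      intro h
      have h1 := hPQ z hga hgb hgc hgd hq0
      have hne := div_ne_zero (mul_ne_zero hga hgb) (mul_ne_zero hgc hgd)
      rw [h1, h] at hne
      simp at hne
    have hPc : P.comp (X + C (2 * (δ:ℂ))) ≠ 0 := comp_shift_ne_zero _ hP0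
    have hQc : Q.comp (X + C (2 * (δ:ℂ))) ≠ 0 := comp_shift_ne_zero _ hQ
    have hXC : ∀ (w e : ℂ), rootMultiplicity w (X + C e) = if w = -e then 1 else 0 := by
      intro w e
      rw [show (X + C e : ℂ[X]) = X - C (-e) by rw [map_neg, sub_neg_eq_add],
        rootMultiplicity_X_sub_C]
    have hrm : ∀ w : ℂ,
        (rootMultiplicity (w + 2 * (δ:ℂ)) P : ℤ) + rootMultiplicity w Q
          + (if w = -(c:ℂ) then 1 else 0) + (if w = -(d:ℂ) then 1 else 0)
        = (rootMultiplicity w P : ℤ) + rootMultiplicity (w + 2 * (δ:ℂ)) Q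
          + (if w = -(a:ℂ) then 1 else 0) + (if w = -(b:ℂ) then 1 else 0) := by
      intro w
      have hX : ∀ e : ℂ, (X + C e : ℂ[X]) ≠ 0 := fun e => X_add_C_ne_zero e
      have n1 : P.comp (X + C (2 * (δ:ℂ))) * Q ≠ 0 := mul_ne_zero hPc hQ
      have n2 : (X + C (c:ℂ)) * (X + C (d:ℂ)) ≠ 0 := mul_ne_zero (hX _) (hX _)
      have n3 : P * Q.comp (X + C (2 * (δ:ℂ))) ≠ 0 := mul_ne_zero hP0 hQc
      have n4 : (X + C (a:ℂ)) * (X + C (b:ℂ)) ≠ 0 := mul_ne_zero (hX _) (hX _)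
      have h := congrArg (rootMultiplicity w) heq
      rw [rootMultiplicity_mul (mul_ne_zero n1 n2), rootMultiplicity_mul n1,
        rootMultiplicity_mul n2, rootMultiplicity_mul (mul_ne_zero n3 n4),
        rootMultiplicity_mul n3, rootMultiplicity_mul n4,
        rootMult_comp, rootMult_comp, hXC, hXC, hXC, hXC] at h
      have h2 := congrArg (fun t : ℕ => (t : ℤ)) h
      push_cast at h2
      linarith [h2]
    -- support bound
    obtain ⟨w₀, hr⟩ := Set.exists_upper_bound_image
      ({x | P.IsRoot x} ∪ {x | Q.IsRoot x} : Set ℂ) (fun w => ‖w‖)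
      ((Polynomial.finite_setOf_isRoot hP0).union (Polynomial.finite_setOf_isRoot hQ))
    obtain ⟨B, hB⟩ := exists_nat_gt ‖w₀‖
    set u : ℤ → ℤ := fun n =>
      (rootMultiplicity ((n:ℂ)) Q : ℤ) - rootMultiplicity ((n:ℂ)) P with hu_def
    have hu : ∀ n : ℤ, (B:ℤ) ≤ |n| → u n = 0 := by
      intro n hn
      have habs : ((B:ℕ):ℝ) ≤ ‖((n:ℂ))‖ := by
        rw [Complex.norm_intCast, ← Int.cast_abs]
        exact_mod_cast hn
      have h1 : ¬ P.IsRoot ((n:ℂ)) := fun h => by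
        have := hr _ (Set.mem_union_left _ h); change ‖(n:ℂ)‖ ≤ ‖w₀‖ at this; linarith
      have h2 : ¬ Q.IsRoot ((n:ℂ)) := fun h => by
        have := hr _ (Set.mem_union_right _ h); change ‖(n:ℂ)‖ ≤ ‖w₀‖ at this; linarith
      simp [hu_def, rootMultiplicity_eq_zero h1, rootMultiplicity_eq_zero h2]
    have huv : ∀ n : ℤ, u (n + 2 * (δ:ℤ)) - u n =
        ((if n = -(c:ℤ) then (1:ℤ) else 0) + (if n = -(d:ℤ) then 1 else 0))
        - ((if n = -(a:ℤ) then 1 else 0) + (if n = -(b:ℤ) then 1 else 0)) := by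
      intro n
      have h := hrm ((n:ℂ))
      have hic : ∀ t : ℕ, (if (n:ℂ) = -(t:ℂ) then (1:ℤ) else 0)
          = (if n = -(t:ℤ) then (1:ℤ) else 0) := by
        intro t
        by_cases hx : n = -(t:ℤ)
        · rw [if_pos (show (n:ℂ) = -(t:ℂ) by exact_mod_cast hx), if_pos hx]
        · rw [if_neg (fun hh => hx (by exact_mod_cast hh)), if_neg hx]
      have hcast : (n:ℂ) + 2 * (δ:ℂ) = (((n + 2 * (δ:ℤ)) : ℤ) : ℂ) := by push_cast; ring
      rw [hcast] at h
      simp only [hic] at h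
      simp only [hu_def]
      linear_combination -h
    have hcount := count_lemma (2 * (δ:ℤ)) (by positivity) a b c d
      (Int.natCast_nonneg a) (Int.natCast_nonneg b) (Int.natCast_nonneg c)
      (Int.natCast_nonneg d) u B hu huv
    exact ⟨by rw [← hlam]; exact hcount.1, hcount.2⟩
  · rintro ⟨hlamd, hor⟩
    rcases hor with hac | had
    · have hbd : (2 * (δ:ℤ)) ∣ (b:ℤ) - d := by
        have he : (b:ℤ) - d = lam - ((a:ℤ) - c) := by omega
        rw [he]; exact dvd_sub hlamd hac
      obtain ⟨p1, q1, hq1, H1⟩ := pair δ hδ a c hac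
      obtain ⟨p2, q2, hq2, H2⟩ := pair δ hδ b d hbd
      refine ⟨p1 * p2, q1 * q2, mul_ne_zero hq1 hq2, ?_⟩
      intro z hGa hGb hGc hGd hQz
      obtain ⟨hq1z, e1⟩ := H1 z hGa hGc
      obtain ⟨hq2z, e2⟩ := H2 z hGb hGd
      rw [eval_mul, eval_mul,
        div_eq_div_iff (mul_ne_zero hGc hGd) (mul_ne_zero hq1z hq2z)]
      linear_combination Complex.Gamma ((z + b) / (2 * (δ:ℂ))) * q2.eval z * e1
        + p1.eval z * Complex.Gamma ((z + c) / (2 * (δ:ℂ))) * e2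
    · have hbc : (2 * (δ:ℤ)) ∣ (b:ℤ) - c := by
        have he : (b:ℤ) - c = lam - ((a:ℤ) - d) := by omega
        rw [he]; exact dvd_sub hlamd had
      obtain ⟨p1, q1, hq1, H1⟩ := pair δ hδ a d had
      obtain ⟨p2, q2, hq2, H2⟩ := pair δ hδ b c hbc
      refine ⟨p1 * p2, q1 * q2, mul_ne_zero hq1 hq2, ?_⟩
      intro z hGa hGb hGc hGd hQz
      obtain ⟨hq1z, e1⟩ := H1 z hGa hGd
      obtain ⟨hq2z, e2⟩ := H2 z hGb hGc
      rw [eval_mul, eval_mul,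
        div_eq_div_iff (mul_ne_zero hGc hGd) (mul_ne_zero hq1z hq2z)]
      linear_combination Complex.Gamma ((z + b) / (2 * (δ:ℂ))) * q2.eval z * e1
        + p1.eval z * Complex.Gamma ((z + d) / (2 * (δ:ℂ))) * e2
end

section
/- Let p, s, n, d be positive integers with p < s, and suppose T_{e^{ipθ}r^n} commutes with T_{e^{isθ}r^d} on every monomial z^k. Let φ̃ and ψ̃ be radial functions with T_{e^{ipθ}r^n} = (T_{e^{iθ}φ̃})^p and T_{e^{isθ}r^d} = (T_{e^{iθ}ψ̃})^s. Then there is a constant c such that T_{e^{iθ}ψ̃} = c·T_{e^{iθ}φ̃}, i.e., T_{e^{iθ}ψ̃}(z^k) = c·T_{e^{iθ}φ̃}(z^k) for all k ≥ 0. -/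
open MeasureTheory Complex Metric Set

noncomputable section

/-- The normalized Lebesgue area measure `dA = (1/π)·(area measure)` on the unit disk `𝔻`. -/
def dA : Measure ℂ := (ENNReal.ofReal Real.pi)⁻¹ • (volume.restrict (ball (0 : ℂ) 1))

/-- The Mellin transform `φ̂(z) = ∫₀¹ φ(r) r^{z-1} r dr` of a radial function. -/
def mellinT (φ : ℝ → ℂ) (z : ℂ) : ℂ :=
  ∫ r in Ioo (0 : ℝ) 1, φ r * (r : ℂ) ^ (z - 1) * (r : ℂ)

/-- Membership of a radial function in `L¹([0,1), r dr)`. -/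
def MemL1rdr (φ : ℝ → ℂ) : Prop :=
  IntegrableOn (fun r : ℝ => φ r * (r : ℂ)) (Ioo (0 : ℝ) 1)

/-- A radial function is nontrivial if it is not almost everywhere zero on `[0,1)`. -/
def RadNontrivial (φ : ℝ → ℂ) : Prop :=
  ¬ (∀ᵐ r ∂(volume.restrict (Ioo (0 : ℝ) 1)), φ r = 0)

/-- The quasihomogeneous symbol `e^{ipθ} φ(r)`, viewed as a function of `z = r e^{iθ} ∈ ℂ`. -/
def quasi (p : ℕ) (φ : ℝ → ℂ) : ℂ → ℂ :=
  fun z => (z / (‖z‖ : ℂ)) ^ p * φ ‖z‖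

/-- The Bergman projection, given by integration against the Bergman kernel
`K(w,z) = (1 - w·conj z)⁻²` with respect to the normalized measure `dA`. -/
def bergmanP (h : ℂ → ℂ) : ℂ → ℂ :=
  fun w => ∫ z, h z / (1 - w * (starRingEnd ℂ) z) ^ 2 ∂dA

/-- The Toeplitz operator `T_f(g) = P(fg)` with symbol `f`. -/
def T (f : ℂ → ℂ) : (ℂ → ℂ) → (ℂ → ℂ) := fun g => bergmanP (fun z => f z * g z)

/-- The quasihomogeneous Toeplitz operator `T_{e^{ipθ}φ}` of degree `p` with radial part `φ`. -/
def Tq (p : ℕ) (φ : ℝ → ℂ) : (ℂ → ℂ) → (ℂ → ℂ) := T (quasi p φ)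

/-- The monomial `z^k`. -/
def mono (k : ℕ) : ℂ → ℂ := fun z => z ^ k

/-- The radial function `r ↦ r^n`. -/
def rpw (n : ℕ) : ℝ → ℂ := fun r => (r : ℂ) ^ n

/-- Pointwise sum of two operators. -/
def opAdd (A B : (ℂ → ℂ) → (ℂ → ℂ)) : (ℂ → ℂ) → (ℂ → ℂ) := fun h => A h + B h

namespace S9

lemma dA_def : dA = (ENNReal.ofReal Real.pi)⁻¹ • (volume.restrict (ball (0 : ℂ) 1)) := rfl

instance : IsFiniteMeasure (volume.restrict (ball (0 : ℂ) 1)) := by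
  constructor
  rw [Measure.restrict_apply_univ]
  exact measure_ball_lt_top

instance : IsFiniteMeasure dA := by
  rw [dA_def]
  constructor
  rw [Measure.smul_apply, smul_eq_mul]
  refine ENNReal.mul_lt_top (by simp [Real.pi_ne_zero, Real.pi_pos]) ?_
  rw [Measure.restrict_apply_univ]
  exact measure_ball_lt_top

lemma ae_abs_lt_one : ∀ᵐ z ∂dA, ‖z‖ < 1 := by
  rw [dA_def]
  refine Measure.ae_smul_measure ?_ _
  filter_upwards [ae_restrict_mem measurableSet_ball] with z hz
  simpa [mem_ball_zero_iff] using hz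

lemma integral_dA_congr {f g : ℂ → ℂ} (h : Set.EqOn f g (ball (0:ℂ) 1)) :
    ∫ z, f z ∂dA = ∫ z, g z ∂dA := by
  refine integral_congr_ae ?_
  rw [dA_def]
  refine Measure.ae_smul_measure ?_ _
  filter_upwards [ae_restrict_mem measurableSet_ball] with z hz
  exact h hz

lemma integral_rotation (u : Circle) (f : ℂ → ℂ) :
    ∫ z, f ((u : ℂ) * z) ∂dA = ∫ z, f z ∂dA := by
  rw [dA_def, integral_smul_measure, integral_smul_measure]
  congr 1
  have hmp : MeasurePreserving (rotation u) volume volume :=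
    (rotation u).measurePreserving
  have hemb : MeasurableEmbedding (rotation u) :=
    (rotation u).toHomeomorph.measurableEmbedding
  have hpre : (rotation u) ⁻¹' (ball (0:ℂ) 1) = ball (0:ℂ) 1 := by
    ext z
    simp [mem_ball_zero_iff, dist_eq_norm, map_zero]
  calc ∫ z in ball (0:ℂ) 1, f ((u:ℂ) * z) = ∫ z in (rotation u) ⁻¹' (ball (0:ℂ) 1), f (rotation u z) := by
        rw [hpre]; simp_rw [rotation_apply]
    _ = ∫ z in ball (0:ℂ) 1, f z := hmp.setIntegral_preimage_emb hemb _ _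

end S9

namespace S9

lemma quasi_rot (q : ℕ) (φ : ℝ → ℂ) (u : Circle) (z : ℂ) :
    quasi q φ ((u : ℂ) * z) = (u : ℂ) ^ q * quasi q φ z := by
  unfold quasi
  have h1 : ‖(u : ℂ) * z‖ = ‖z‖ := by rw [norm_mul, Circle.norm_coe, one_mul]
  rw [h1, mul_div_assoc, mul_pow, mul_assoc]

lemma integral_conj_pow_quasi {q k m : ℕ} (hq : 1 ≤ q) (φ : ℝ → ℂ) (hm : m ≠ k + q) :
    ∫ z, (starRingEnd ℂ) z ^ m * (quasi q φ z * mono k z) ∂dA = 0 := by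
  set F : ℂ → ℂ := fun z => (starRingEnd ℂ) z ^ m * (quasi q φ z * mono k z) with hF
  set t : ℕ := k + q + m + 1 with hts
  have ht : 0 < t := by omega
  set θ : ℝ := Real.pi / t with hθ
  have hθpos : 0 < θ := by
    apply div_pos Real.pi_pos
    exact_mod_cast ht
  set u : Circle := Circle.exp θ with hu
  have hcoe : (u : ℂ) = Complex.exp (θ * Complex.I) := by simp [hu]
  set c : ℂ := (starRingEnd ℂ) (u : ℂ) ^ m * (u : ℂ) ^ (k + q) with hc
  have hpt : ∀ z : ℂ, F ((u : ℂ) * z) = c * F z := by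
    intro z
    simp only [hF, map_mul, mul_pow, quasi_rot, mono, hc]
    ring
  have h1 : ∫ z, F z ∂dA = c * ∫ z, F z ∂dA := by
    conv_lhs => rw [← integral_rotation u F]
    simp_rw [hpt]
    exact integral_const_mul c _
  set δ : ℝ := ((k : ℝ) + q - m) * θ with hδ
  have hval : c = Complex.exp (δ * Complex.I) := by
    rw [hc, hcoe, ← Complex.exp_conj]
    have : (starRingEnd ℂ) ((θ : ℂ) * Complex.I) = -(θ : ℂ) * Complex.I := by
      simp [Complex.conj_I]
    rw [this, ← Complex.exp_nat_mul, ← Complex.exp_nat_mul, ← Complex.exp_add]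
    congr 1
    push_cast [hδ]
    ring
  have hδne : δ ≠ 0 := by
    refine mul_ne_zero ?_ (ne_of_gt hθpos)
    have : (k : ℝ) + q ≠ (m : ℝ) := by
      intro h
      apply hm
      exact_mod_cast h.symm
    intro h
    apply this
    linarith
  have hδlt : |δ| < Real.pi := by
    have h1 : |(k : ℝ) + q - m| ≤ (k : ℝ) + q + m := by
      rcases le_total ((k : ℝ) + q) m with h | h
      · rw [abs_of_nonpos (by linarith)]
        have : (0:ℝ) ≤ (k : ℝ) + q := by positivity
        linarith
      · rw [_root_.abs_of_nonneg (by linarith : (0:ℝ) ≤ (k : ℝ) + q - m)]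
        have : (0:ℝ) ≤ (m:ℝ) := by positivity
        linarith
    have h2 : |δ| = |(k : ℝ) + q - m| * θ := by
      rw [hδ, abs_mul, abs_of_pos hθpos]
    have h3 : ((k : ℝ) + q + m) * θ < Real.pi := by
      rw [hθ]
      have htR : (0:ℝ) < t := by exact_mod_cast ht
      rw [div_eq_mul_inv, ← mul_assoc]
      have hlt : (k : ℝ) + q + m < t := by
        rw [hts]; push_cast; linarith
      calc ((k:ℝ) + q + m) * Real.pi * (t:ℝ)⁻¹ < (t:ℝ) * Real.pi * (t:ℝ)⁻¹ := by
            apply mul_lt_mul_of_pos_right _ (by positivity)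
            exact mul_lt_mul_of_pos_right hlt Real.pi_pos
        _ = Real.pi := by field_simp
    calc |δ| = |(k : ℝ) + q - m| * θ := h2
      _ ≤ ((k : ℝ) + q + m) * θ := by
          apply mul_le_mul_of_nonneg_right h1 hθpos.le
      _ < Real.pi := h3
  have hcne : c ≠ 1 := by
    rw [hval]
    intro h
    rw [Complex.exp_eq_one_iff] at h
    obtain ⟨nz, hnz⟩ := h
    have : (δ : ℂ) = (nz : ℂ) * (2 * Real.pi) := by
      apply mul_right_cancel₀ Complex.I_ne_zero
      rw [hnz]; ring
    have hre : δ = (nz : ℝ) * (2 * Real.pi) := by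
      exact_mod_cast this
    rcases eq_or_ne nz 0 with h0 | h0
    · rw [h0] at hre
      norm_num at hre
      exact hδne hre
    · have : (1 : ℝ) ≤ |(nz : ℝ)| := by
        rw [← Int.cast_abs]
        exact_mod_cast Int.one_le_abs h0
      have : 2 * Real.pi ≤ |δ| := by
        rw [hre, abs_mul]
        have h2 : |2 * Real.pi| = 2 * Real.pi := abs_of_pos (by positivity)
        nlinarith [Real.pi_pos]
      nlinarith [Real.pi_pos]
  have := sub_eq_zero.mpr h1
  rw [show ∫ z, F z ∂dA - c * ∫ z, F z ∂dA = (1 - c) * ∫ z, F z ∂dA by ring] at this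
  rcases mul_eq_zero.mp this with h | h
  · exact absurd (by linear_combination -h) hcne
  · exact h

end S9

namespace S9

def F0 (q k : ℕ) (φ : ℝ → ℂ) : ℂ → ℂ := fun z => quasi q φ z * mono k z

open scoped Classical in
def coefA (q k : ℕ) (φ : ℝ → ℂ) : ℂ :=
  if Integrable (F0 q k φ) dA then
    ((k : ℂ) + q + 1) * ∫ z, (starRingEnd ℂ) z ^ (k + q) * F0 q k φ z ∂dA
  else 0

lemma hasSum_kernel {x : ℂ} (hx : ‖x‖ < 1) :
    HasSum (fun m : ℕ => ((m : ℂ) + 1) * x ^ m) (1 / (1 - x) ^ 2) := by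
  have h1 := hasSum_coe_mul_geometric_of_norm_lt_one hx
  have h2 := hasSum_geometric_of_norm_lt_one hx
  have h3 := h1.add h2
  have hx1 : (1 : ℂ) - x ≠ 0 := by
    intro h
    rw [sub_eq_zero] at h
    rw [← h] at hx
    simp at hx
  have e : (fun m : ℕ => ((m : ℂ) + 1) * x ^ m) = (fun b : ℕ => (b:ℂ) * x ^ b + x ^ b) := by
    funext m; ring
  have e2 : (1:ℂ) / (1 - x) ^ 2 = x / (1 - x) ^ 2 + (1 - x)⁻¹ := by
    field_simp; ring
  rw [e, e2]; exact h3

lemma norm_term (m : ℕ) (w z : ℂ) :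
    ‖((m : ℂ) + 1) * (w * (starRingEnd ℂ) z) ^ m‖ = ((m : ℝ) + 1) * (‖w‖ * ‖z‖) ^ m := by
  rw [norm_mul, norm_pow, norm_mul, RCLike.norm_conj]
  congr 1
  have : ((m : ℂ) + 1) = ((m + 1 : ℕ) : ℂ) := by push_cast; ring
  rw [this, Complex.norm_natCast]
  push_cast; ring

lemma Tq_mono_eq (q k : ℕ) (hq : 1 ≤ q) (φ : ℝ → ℂ) {w : ℂ} (hw : w ∈ ball (0:ℂ) 1) :
    Tq q φ (mono k) w = coefA q k φ * w ^ (k + q) := by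
  have hwn : ‖w‖ < 1 := by rwa [mem_ball_zero_iff] at hw
  have hTq : Tq q φ (mono k) w = ∫ z, F0 q k φ z / (1 - w * (starRingEnd ℂ) z) ^ 2 ∂dA := rfl
  by_cases hInt : Integrable (F0 q k φ) dA
  · -- integrable case
    set f : ℕ → ℂ → ℂ := fun m z => (((m : ℂ) + 1) * (w * (starRingEnd ℂ) z) ^ m) * F0 q k φ z
      with hf
    have hmeas : ∀ m : ℕ, AEStronglyMeasurable (fun z => ((m : ℂ) + 1) * (w * (starRingEnd ℂ) z) ^ m) dA := by
      intro m
      exact (continuous_const.mul ((continuous_const.mul (Complex.continuous_conj)).pow m)).aestronglyMeasurable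
    have hint : ∀ m : ℕ, Integrable (f m) dA := by
      intro m
      refine hInt.bdd_mul (c := ((m : ℝ) + 1) * ‖w‖ ^ m) (hmeas m) ?_
      filter_upwards [ae_abs_lt_one] with z hz
      rw [norm_term]
      have hz1 : ‖z‖ ≤ 1 := by exact hz.le
      have : (‖w‖ * ‖z‖) ^ m ≤ ‖w‖ ^ m := by
        apply pow_le_pow_left₀ (by positivity)
        nlinarith [norm_nonneg w]
      nlinarith [norm_nonneg w, pow_nonneg (norm_nonneg w) m]
    set M : ℝ := ∫ z, ‖F0 q k φ z‖ ∂dA with hM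
    have hMnn : 0 ≤ M := integral_nonneg (fun z => norm_nonneg _)
    have hnorm : ∀ m : ℕ, (∫ z, ‖f m z‖ ∂dA) ≤ (((m : ℝ) + 1) * ‖w‖ ^ m) * M := by
      intro m
      have h1 : (∫ z, ‖f m z‖ ∂dA) ≤ ∫ z, (((m : ℝ) + 1) * ‖w‖ ^ m) * ‖F0 q k φ z‖ ∂dA := by
        refine integral_mono_ae (hint m).norm (hInt.norm.const_mul _) ?_
        filter_upwards [ae_abs_lt_one] with z hz
        have hz1 : ‖z‖ ≤ 1 := by exact hz.le
        have hle : (‖w‖ * ‖z‖) ^ m ≤ ‖w‖ ^ m := by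
          apply pow_le_pow_left₀ (by positivity)
          nlinarith [norm_nonneg w]
        have hFnn : 0 ≤ ‖F0 q k φ z‖ := norm_nonneg _
        calc ‖f m z‖ = ‖((m : ℂ) + 1) * (w * (starRingEnd ℂ) z) ^ m‖ * ‖F0 q k φ z‖ :=
              norm_mul _ _
          _ = ((m:ℝ) + 1) * (‖w‖ * ‖z‖) ^ m * ‖F0 q k φ z‖ := by rw [norm_term]
          _ ≤ ((m:ℝ) + 1) * ‖w‖ ^ m * ‖F0 q k φ z‖ := by
              have h0 : (0:ℝ) ≤ (m:ℝ)+1 := by positivity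
              have h2 := mul_le_mul_of_nonneg_right hle hFnn
              nlinarith
      rw [integral_const_mul] at h1
      exact h1
    have hsum : Summable (fun m : ℕ => ∫ z, ‖f m z‖ ∂dA) := by
      have hb : Summable (fun m : ℕ => (((m : ℝ) + 1) * ‖w‖ ^ m) * M) := by
        have s1 : Summable (fun m : ℕ => (m : ℝ) * ‖w‖ ^ m) := by
          simpa using summable_pow_mul_geometric_of_norm_lt_one 1 (r := ‖w‖)
            (by rwa [Real.norm_eq_abs, _root_.abs_of_nonneg (norm_nonneg w)])
        have s2 : Summable (fun m : ℕ => ‖w‖ ^ m) :=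
          summable_geometric_of_lt_one (norm_nonneg w) hwn
        have := (s1.add s2).mul_right M
        refine this.congr (fun m => ?_)
        ring
      refine Summable.of_nonneg_of_le (fun m => integral_nonneg fun z => norm_nonneg _)
        (fun m => hnorm m) hb
    have hHasSum := hasSum_integral_of_summable_integral_norm hint hsum
    have hae : (fun z => ∑' m, f m z) =ᵐ[dA] fun z => F0 q k φ z / (1 - w * (starRingEnd ℂ) z) ^ 2 := by
      filter_upwards [ae_abs_lt_one] with z hz
      have hx : ‖w * (starRingEnd ℂ) z‖ < 1 := by
        rw [norm_mul, RCLike.norm_conj]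
        have hz1 : ‖z‖ < 1 := by exact hz
        nlinarith [norm_nonneg w, norm_nonneg z]
      have : HasSum (fun m => f m z) ((1 / (1 - w * (starRingEnd ℂ) z) ^ 2) * F0 q k φ z) :=
        (hasSum_kernel hx).mul_right _
      rw [this.tsum_eq]
      ring
    rw [integral_congr_ae hae] at hHasSum
    rw [← hTq] at hHasSum
    have hterm : ∀ m : ℕ, (∫ z, f m z ∂dA)
        = (((m : ℂ) + 1) * w ^ m) * ∫ z, (starRingEnd ℂ) z ^ m * F0 q k φ z ∂dA := by
      intro m
      rw [← integral_const_mul]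
      congr 1
      funext z
      rw [hf]
      simp only [mul_pow]
      ring
    have hzero : ∀ m : ℕ, m ≠ k + q → (∫ z, f m z ∂dA) = 0 := by
      intro m hm
      rw [hterm m,
        show (∫ z, (starRingEnd ℂ) z ^ m * F0 q k φ z ∂dA) = 0 from
          integral_conj_pow_quasi hq φ hm, mul_zero]
    have hsingle : HasSum (fun m => ∫ z, f m z ∂dA) (∫ z, f (k+q) z ∂dA) :=
      hasSum_single (k+q) hzero
    have := hHasSum.unique hsingle
    rw [this, hterm (k+q)]
    simp only [coefA]
    rw [if_pos hInt]
    push_cast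
    ring
  · -- non-integrable case
    have hni : ¬ Integrable (fun z => F0 q k φ z / (1 - w * (starRingEnd ℂ) z) ^ 2) dA := by
      intro h
      apply hInt
      have hmeas2 : AEStronglyMeasurable (fun z => (1 - w * (starRingEnd ℂ) z) ^ 2) dA :=
        ((continuous_const.sub (continuous_const.mul Complex.continuous_conj)).pow 2).aestronglyMeasurable
      have hbd : Integrable (fun z => (1 - w * (starRingEnd ℂ) z) ^ 2 * (F0 q k φ z / (1 - w * (starRingEnd ℂ) z) ^ 2)) dA := by
        refine h.bdd_mul (c := 4) hmeas2 ?_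
        filter_upwards [ae_abs_lt_one] with z hz
        rw [norm_pow]
        have hz1 : ‖z‖ ≤ 1 := by exact hz.le
        have h1 : ‖1 - w * (starRingEnd ℂ) z‖ ≤ 2 := by
          calc ‖1 - w * (starRingEnd ℂ) z‖ ≤ ‖(1:ℂ)‖ + ‖w * (starRingEnd ℂ) z‖ := norm_sub_le _ _
            _ ≤ 1 + 1 := by
                simp only [norm_one, norm_mul, RCLike.norm_conj]
                nlinarith [norm_nonneg w, norm_nonneg z]
            _ = 2 := by norm_num
        calc ‖1 - w * (starRingEnd ℂ) z‖ ^ 2 ≤ 2 ^ 2 := by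
              apply pow_le_pow_left₀ (norm_nonneg _) h1
          _ = 4 := by norm_num
      refine hbd.congr ?_
      filter_upwards [ae_abs_lt_one] with z hz
      have hx : ‖w * (starRingEnd ℂ) z‖ < 1 := by
        rw [norm_mul, RCLike.norm_conj]
        have hz1 : ‖z‖ < 1 := by exact hz
        nlinarith [norm_nonneg w, norm_nonneg z]
      have hne : (1 - w * (starRingEnd ℂ) z) ^ 2 ≠ 0 := by
        apply pow_ne_zero
        intro hc
        rw [sub_eq_zero] at hc
        rw [← hc] at hx
        simp at hx
      rw [mul_comm, div_mul_cancel₀ _ hne]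
    rw [hTq, integral_undef hni]
    simp only [coefA]
    rw [if_neg hInt, zero_mul]

end S9

namespace S9

lemma integral_abs_pow (j : ℕ) :
    ∫ z, ((‖z‖ : ℝ) : ℂ) ^ j ∂dA = 2 / ((j : ℂ) + 2) := by
  rw [dA_def, integral_smul_measure]
  have hπ : ((ENNReal.ofReal Real.pi)⁻¹).toReal = Real.pi⁻¹ := by
    rw [ENNReal.toReal_inv, ENNReal.toReal_ofReal Real.pi_pos.le]
  rw [hπ]
  set g : ℝ → ℂ := Set.indicator (Iio (1:ℝ)) (fun r : ℝ => ((r : ℝ) : ℂ) ^ j) with hg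
  have h1 : ∫ z in ball (0:ℂ) 1, ((‖z‖ : ℝ) : ℂ) ^ j ∂volume
      = ∫ z : ℂ, g ‖z‖ ∂volume := by
    rw [← integral_indicator measurableSet_ball]
    congr 1
    funext z
    by_cases hz : z ∈ ball (0:ℂ) 1
    · rw [indicator_of_mem hz, hg, indicator_of_mem (by rwa [mem_Iio, ← mem_ball_zero_iff])]
    · rw [indicator_of_notMem hz, hg,
        indicator_of_notMem (by rwa [mem_Iio, ← mem_ball_zero_iff])]
  rw [h1, integral_fun_norm_addHaar volume g]
  have hrank : Module.finrank ℝ ℂ = 2 := Complex.finrank_real_complex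
  rw [hrank]
  have h2 : ∫ y in Ioi (0:ℝ), y ^ (2-1) • g y = ∫ y in Ioo (0:ℝ) 1, ((y:ℝ):ℂ) ^ (j+1) := by
    have hpt : ∀ y : ℝ, y ^ (2-1) • g y
        = Set.indicator (Iio (1:ℝ)) (fun y : ℝ => ((y:ℝ):ℂ)^(j+1)) y := by
      intro y
      by_cases hy : y ∈ Iio (1:ℝ)
      · rw [hg, indicator_of_mem hy, indicator_of_mem hy]
        rw [pow_one, Complex.real_smul, pow_succ']
      · rw [hg, indicator_of_notMem hy, indicator_of_notMem hy, smul_zero]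
    simp_rw [hpt]
    rw [setIntegral_indicator measurableSet_Iio, Set.Ioi_inter_Iio]
  rw [h2]
  have h3R : ∫ y in Ioo (0:ℝ) 1, (y ^ (j+1) : ℝ) = ((j:ℝ)+2)⁻¹ := by
    rw [← integral_Ioc_eq_integral_Ioo, ← intervalIntegral.integral_of_le zero_le_one,
      integral_pow]
    push_cast
    ring
  have h3 : ∫ y in Ioo (0:ℝ) 1, ((y:ℝ):ℂ) ^ (j+1) = ((((j:ℝ)+2)⁻¹ : ℝ) : ℂ) := by
    have hpt : ∀ y : ℝ, ((y:ℝ):ℂ)^(j+1) = ((y^(j+1) : ℝ) : ℂ) := by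
      intro y; push_cast; ring
    simp_rw [hpt]
    have hint : IntegrableOn (fun y : ℝ => y ^ (j+1)) (Ioo (0:ℝ) 1) := by
      apply IntegrableOn.mono_set (t := Icc (0:ℝ) 1)
      · exact (continuous_pow (j+1)).integrableOn_Icc
      · exact Ioo_subset_Icc_self
    have hcc := ContinuousLinearMap.integral_comp_comm Complex.ofRealCLM hint
    simp only [Complex.ofRealCLM_apply] at hcc
    rw [hcc, h3R]
  rw [h3]
  have hball : volume.real (ball (0:ℂ) 1) = Real.pi := by
    rw [measureReal_def, Complex.volume_ball]
    simp [ENNReal.toReal_mul]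
  rw [hball]
  have hjR : ((j:ℝ)+2) ≠ 0 := by positivity
  have hπ0 : Real.pi ≠ 0 := Real.pi_ne_zero
  have hjC : ((j:ℂ)+2) ≠ 0 := by
    have : ((j+2 : ℕ) : ℂ) ≠ 0 := Nat.cast_ne_zero.mpr (by omega)
    push_cast at this
    convert this using 1
  rw [nsmul_eq_mul, Complex.real_smul, Complex.real_smul]
  push_cast
  have hπC : ((Real.pi : ℝ) : ℂ) ≠ 0 := by
    exact_mod_cast Complex.ofReal_ne_zero.mpr hπ0
  field_simp

lemma conj_mul_self (z : ℂ) : (starRingEnd ℂ) z * z = ((‖z‖ : ℝ) : ℂ) ^ 2 := by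
  rw [mul_comm, Complex.mul_conj, Complex.normSq_eq_norm_sq]
  push_cast
  ring

lemma F0_meas (q k : ℕ) (n : ℕ) : AEStronglyMeasurable (F0 q k (rpw n)) dA := by
  apply Measurable.aestronglyMeasurable
  apply Measurable.mul
  · apply Measurable.mul
    · apply Measurable.pow_const
      exact measurable_id.div
        (Complex.measurable_ofReal.comp continuous_norm.measurable)
    · exact (Complex.measurable_ofReal.comp continuous_norm.measurable).pow_const n
  · exact measurable_id.pow_const k

lemma norm_unit_div (z : ℂ) : ‖z / (‖z‖ : ℂ)‖ ≤ 1 := by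
  by_cases hz : z = 0
  · simp [hz]
  · rw [norm_div]
    have h1 : ‖(‖z‖ : ℂ)‖ = ‖z‖ := by
      rw [Complex.norm_real, Real.norm_eq_abs, _root_.abs_of_nonneg (norm_nonneg z)]
    rw [h1]
    have : ‖z‖ ≠ 0 := by simpa using hz
    rw [div_self this]

lemma F0_rpw_integrable (q k n : ℕ) : Integrable (F0 q k (rpw n)) dA := by
  refine (integrable_const (1:ℝ)).mono' (F0_meas q k n) ?_
  filter_upwards [ae_abs_lt_one] with z hz
  have hz1 : ‖z‖ ≤ 1 := hz.le
  have h0 : (0:ℝ) ≤ ‖z‖ := norm_nonneg z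
  simp only [F0, quasi, rpw, mono, norm_mul]
  have e1 : ‖(z / (‖z‖ : ℂ)) ^ q‖ ≤ 1 := by
    rw [norm_pow]
    exact pow_le_one₀ (norm_nonneg _) (norm_unit_div z)
  have e2 : ‖((‖z‖ : ℝ) : ℂ) ^ n‖ ≤ 1 := by
    rw [norm_pow, Complex.norm_real, Real.norm_eq_abs, _root_.abs_of_nonneg h0]
    exact pow_le_one₀ h0 hz1
  have e3 : ‖z ^ k‖ ≤ 1 := by
    rw [norm_pow]
    exact pow_le_one₀ h0 hz1
  exact mul_le_one₀ (mul_le_one₀ e1 (norm_nonneg _) e2) (norm_nonneg _) e3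

lemma coefA_rpw (q k n : ℕ) (hq : 1 ≤ q) :
    coefA q k (rpw n) = 2 * ((k : ℂ) + q + 1) / (2*(k:ℂ) + q + n + 2) := by
  have hInt := F0_rpw_integrable q k n
  simp only [coefA]
  rw [if_pos hInt]
  have hpt : ∀ z : ℂ, (starRingEnd ℂ) z ^ (k + q) * F0 q k (rpw n) z
      = ((‖z‖ : ℝ) : ℂ) ^ (2*k + q + n) := by
    intro z
    by_cases hz : z = 0
    · subst hz
      have h1 : (starRingEnd ℂ) (0:ℂ) = 0 := by simp
      simp only [F0, quasi, mono, rpw, h1]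
      rw [zero_pow (by omega : k + q ≠ 0)]
      rw [show ‖(0:ℂ)‖ = 0 from by simp]
      push_cast
      rw [zero_pow (by omega : 2*k + q + n ≠ 0)]
      ring
    · have hA : ((‖z‖ : ℝ) : ℂ) ≠ 0 := by
        simpa using hz
      simp only [F0, quasi, mono, rpw, div_pow]
      have h2 : (starRingEnd ℂ) z ^ (k+q) * z ^ (k+q)
          = (((‖z‖ : ℝ) : ℂ) ^ 2) ^ (k+q) := by
        rw [← mul_pow, conj_mul_self]
      field_simp
      linear_combination (((‖z‖ : ℝ) : ℂ) ^ n) * h2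
  simp_rw [hpt]
  rw [integral_abs_pow]
  have hd : ((2*k+q+n+2 : ℕ) : ℂ) ≠ 0 := Nat.cast_ne_zero.mpr (by omega)
  have hd3 : 2*(k:ℂ) + q + n + 2 ≠ 0 := by
    intro hc
    apply hd
    push_cast
    linear_combination hc
  have hd2 : ((2*k+q+n : ℕ) : ℂ) + 2 ≠ 0 := by
    intro hc
    apply hd3
    push_cast at hc
    linear_combination hc
  push_cast
  push_cast at hd2 hd3
  field_simp

end S9

namespace S9

lemma Tq_const_mono (q m : ℕ) (hq : 1 ≤ q) (φ : ℝ → ℂ) {g : ℂ → ℂ} {c : ℂ}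
    (hg : Set.EqOn g (fun z => c * mono m z) (ball (0:ℂ) 1)) {w : ℂ} (hw : w ∈ ball (0:ℂ) 1) :
    Tq q φ g w = c * (coefA q m φ * w ^ (m + q)) := by
  have h1 : Tq q φ g w = ∫ z, quasi q φ z * g z / (1 - w * (starRingEnd ℂ) z) ^ 2 ∂dA := rfl
  have h2 : ∫ z, quasi q φ z * g z / (1 - w * (starRingEnd ℂ) z) ^ 2 ∂dA
      = ∫ z, c * (quasi q φ z * mono m z / (1 - w * (starRingEnd ℂ) z) ^ 2) ∂dA := by
    apply integral_dA_congr
    intro z hz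
    simp only
    rw [hg hz]
    ring
  have h3 : Tq q φ (mono m) w
      = ∫ z, quasi q φ z * mono m z / (1 - w * (starRingEnd ℂ) z) ^ 2 ∂dA := rfl
  rw [h1, h2, integral_const_mul, ← h3, Tq_mono_eq q m hq φ hw]

lemma iterate_Tq (φ : ℝ → ℂ) (j k : ℕ) {w : ℂ} (hw : w ∈ ball (0:ℂ) 1) :
    (Tq 1 φ)^[j] (mono k) w = (∏ i ∈ Finset.range j, coefA 1 (k+i) φ) * w ^ (k + j) := by
  induction j generalizing w with
  | zero => simp [mono]
  | succ j ih =>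
    rw [Function.iterate_succ_apply']
    have hg : Set.EqOn ((Tq 1 φ)^[j] (mono k))
        (fun z => (∏ i ∈ Finset.range j, coefA 1 (k+i) φ) * mono (k+j) z) (ball (0:ℂ) 1) := by
      intro z hz
      rw [ih hz]
      rfl
    rw [Tq_const_mono 1 (k+j) le_rfl φ hg hw, Finset.prod_range_succ]
    ring

lemma const_mono_inj {c₁ c₂ : ℂ} {m : ℕ}
    (h : ∀ w ∈ ball (0:ℂ) 1, c₁ * w ^ m = c₂ * w ^ m) : c₁ = c₂ := by
  have hmem : (1/2 : ℂ) ∈ ball (0:ℂ) 1 := by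
    rw [mem_ball_zero_iff]
    rw [show (1/2 : ℂ) = ((1/2 : ℝ) : ℂ) by push_cast; ring, Complex.norm_real]
    rw [Real.norm_eq_abs, abs_of_pos (by norm_num : (0:ℝ) < 1/2)]
    norm_num
  have := h _ hmem
  have hne : ((1:ℂ)/2) ^ m ≠ 0 := pow_ne_zero _ (by norm_num)
  exact mul_right_cancel₀ hne this

def Gfun (φ : ℝ → ℂ) : ℂ → ℂ := fun z => φ (‖z‖) * ((‖z‖ : ℝ) : ℂ)

lemma Gfun_eq (φ : ℝ → ℂ) (z : ℂ) : Gfun φ z = (starRingEnd ℂ) z * F0 1 0 φ z := by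
  by_cases hz : z = 0
  · subst hz
    simp [Gfun, F0, quasi, mono]
  · have hA : ((‖z‖ : ℝ) : ℂ) ≠ 0 := by simpa using hz
    simp only [Gfun, F0, quasi, mono, pow_one, pow_zero, mul_one]
    have h2 := conj_mul_self z
    field_simp
    linear_combination -(φ (‖z‖)) * h2

lemma abs_pow_meas (m : ℕ) :
    AEStronglyMeasurable (fun z : ℂ => ((‖z‖ : ℝ) : ℂ) ^ m) dA :=
  ((Complex.measurable_ofReal.comp continuous_norm.measurable).pow_const m).aestronglyMeasurable

lemma abs_pow_norm_le {z : ℂ} (hz : ‖z‖ < 1) (m : ℕ) :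
    ‖((‖z‖ : ℝ) : ℂ) ^ m‖ ≤ 1 := by
  rw [norm_pow, Complex.norm_real, Real.norm_eq_abs,
    _root_.abs_of_nonneg (norm_nonneg z)]
  exact pow_le_one₀ (norm_nonneg z) hz.le

lemma abs_pow_integrable (m : ℕ) :
    Integrable (fun z : ℂ => ((‖z‖ : ℝ) : ℂ) ^ m) dA := by
  refine (integrable_const (1:ℝ)).mono' (abs_pow_meas m) ?_
  filter_upwards [ae_abs_lt_one] with z hz
  exact abs_pow_norm_le hz m

lemma mul_abs_pow_integrable {H : ℂ → ℂ} (hH : Integrable H dA) (m : ℕ) :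
    Integrable (fun z => H z * ((‖z‖ : ℝ) : ℂ) ^ m) dA := by
  have h := hH.bdd_mul (c := 1) (abs_pow_meas m) ?_
  · refine h.congr (Filter.Eventually.of_forall fun z => ?_)
    ring
  · filter_upwards [ae_abs_lt_one] with z hz
    exact abs_pow_norm_le hz m

lemma G_integrable (φ : ℝ → ℂ) (h : Integrable (F0 1 0 φ) dA) :
    Integrable (Gfun φ) dA := by
  have hst : AEStronglyMeasurable (fun z : ℂ => (starRingEnd ℂ) z) dA :=
    Complex.continuous_conj.aestronglyMeasurable
  have hb := h.bdd_mul (c := 1) hst ?_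
  · exact hb.congr (Filter.Eventually.of_forall fun z => (Gfun_eq φ z).symm)
  · filter_upwards [ae_abs_lt_one] with z hz
    rw [RCLike.norm_conj]
    exact hz.le

lemma moment_eq (φ : ℝ → ℂ) (k : ℕ) (h : Integrable (F0 1 k φ) dA) :
    coefA 1 k φ = ((k:ℂ)+2) * ∫ z, Gfun φ z * ((‖z‖ : ℝ):ℂ)^(2*k) ∂dA := by
  simp only [coefA]
  rw [if_pos h]
  have hpt : ∀ z : ℂ, (starRingEnd ℂ) z ^ (k + 1) * F0 1 k φ z
      = Gfun φ z * ((‖z‖ : ℝ):ℂ)^(2*k) := by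
    intro z
    by_cases hz : z = 0
    · subst hz
      have h1 : (starRingEnd ℂ) (0:ℂ) = 0 := by simp
      simp [Gfun, F0, quasi, mono, h1, zero_pow (by omega : k + 1 ≠ 0)]
    · have hA : ((‖z‖ : ℝ) : ℂ) ≠ 0 := by simpa using hz
      simp only [Gfun, F0, quasi, mono, pow_one]
      have h2 : (starRingEnd ℂ) z ^ (k+1) * z ^ (k+1)
          = (((‖z‖ : ℝ) : ℂ) ^ 2) ^ (k+1) := by
        rw [← mul_pow, conj_mul_self]
      field_simp
      linear_combination φ (‖z‖) * h2
  simp_rw [hpt]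
  push_cast
  ring

lemma moments_vanish {H : ℂ → ℂ} (hH : Integrable H dA) (P : ℕ) (hP : 1 ≤ P)
    (hz : ∀ q : ℕ, ∫ z, H z * ((‖z‖ : ℝ):ℂ)^(2*(P*q)) ∂dA = 0) (j : ℕ) :
    ∫ z, H z * ((‖z‖ : ℝ):ℂ)^(2*j) ∂dA = 0 := by
  set X := ∫ z, H z * ((‖z‖ : ℝ):ℂ)^(2*j) ∂dA with hX
  set M : ℝ := ∫ z, ‖H z‖ ∂dA with hMdef
  have hMnn : 0 ≤ M := integral_nonneg fun z => norm_nonneg _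
  suffices hsuff : ∀ ε : ℝ, 0 < ε → ‖X‖ ≤ ε * (M+1) by
    by_contra hXne
    have hpos : 0 < ‖X‖ := norm_pos_iff.mpr hXne
    have hM1 : (0:ℝ) < M + 1 := by linarith
    have := hsuff (‖X‖/(2*(M+1))) (by positivity)
    rw [div_mul_eq_mul_div, mul_comm] at this
    have h2 : (M+1) * ‖X‖ / (2 * (M + 1)) = ‖X‖ / 2 := by
      field_simp
    rw [h2] at this
    linarith
  intro ε hε
  -- the continuous function t ↦ t^(j/P) on [0,1]
  have hcont1 : Continuous fun x : ℝ => x ^ ((j:ℝ)/(P:ℝ)) := by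
    rw [continuous_iff_continuousAt]
    intro x
    apply Real.continuousAt_rpow_const
    right
    positivity
  have hcont : Continuous fun t : Icc (0:ℝ) 1 => ((t : ℝ) ^ ((j:ℝ)/(P:ℝ)) : ℝ) :=
    hcont1.comp continuous_subtype_val
  set f : C(Icc (0:ℝ) 1, ℝ) := ⟨fun t => ((t : ℝ) ^ ((j:ℝ)/(P:ℝ)) : ℝ), hcont⟩ with hf
  obtain ⟨Q, hQ⟩ := exists_polynomial_near_continuousMap 0 1 f ε hε
  have hQbound : ∀ t : ℝ, t ∈ Icc (0:ℝ) 1 → |Q.eval t - t ^ ((j:ℝ)/(P:ℝ))| ≤ ε := by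
    intro t ht
    have h1 := (Q.toContinuousMapOn (Icc (0:ℝ) 1) - f).norm_coe_le_norm ⟨t, ht⟩
    have h2 : (Q.toContinuousMapOn (Icc (0:ℝ) 1) - f) ⟨t, ht⟩
        = Q.eval t - t ^ ((j:ℝ)/(P:ℝ)) := by
      simp [hf, Polynomial.toContinuousMapOn_apply, Polynomial.toContinuousMap_apply]
    rw [h2] at h1
    rw [← Real.norm_eq_abs]
    exact h1.trans hQ.le
  -- pointwise estimate for z in the ball
  have hkey : ∀ z : ℂ, ‖z‖ < 1 →
      ‖((‖z‖ : ℝ):ℂ)^(2*j) - (((Q.eval ((‖z‖)^(2*P)) : ℝ)) : ℂ)‖ ≤ ε := by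
    intro z hzlt
    set u : ℝ := (‖z‖)^2 with hu
    have hu0 : 0 ≤ u := by positivity
    have hu1 : u ≤ 1 := by
      rw [hu]
      nlinarith [norm_nonneg z]
    have hmem : u ^ P ∈ Icc (0:ℝ) 1 := ⟨by positivity, pow_le_one₀ hu0 hu1⟩
    have hrpow : (u ^ P : ℝ) ^ ((j:ℝ)/(P:ℝ)) = u ^ j := by
      rw [← Real.rpow_natCast u P, ← Real.rpow_mul hu0, ← Real.rpow_natCast u j]
      congr 1
      have hP0 : (P:ℝ) ≠ 0 := by positivity
      field_simp
    have hQb := hQbound (u ^ P) hmem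
    rw [hrpow] at hQb
    have hcast : ((‖z‖ : ℝ):ℂ)^(2*j) = ((u ^ j : ℝ) : ℂ) := by
      rw [hu]
      push_cast
      rw [pow_mul]
    have hcast2 : (‖z‖)^(2*P) = u ^ P := by
      rw [hu, pow_mul]
    rw [hcast, hcast2, ← Complex.ofReal_sub, Complex.norm_real, Real.norm_eq_abs]
    rw [abs_sub_comm]
    exact hQb
  -- decompose X
  set A : ℂ → ℂ := fun z => ((‖z‖ : ℝ):ℂ) with hA
  set RR : ℂ → ℂ := fun z => (((Q.eval ((‖z‖)^(2*P)) : ℝ)) : ℂ) with hRR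
  have hRRcont : Continuous RR := by
    apply Complex.continuous_ofReal.comp
    exact (Polynomial.continuous Q).comp (continuous_norm.pow (2*P))
  set dif : ℂ → ℂ := fun z => A z ^ (2*j) - RR z with hdif
  have hdifmeas : AEStronglyMeasurable dif dA := by
    apply AEStronglyMeasurable.sub (abs_pow_meas (2*j)) hRRcont.aestronglyMeasurable
  have hHdiff : Integrable (fun z => H z * dif z) dA := by
    have h := hH.bdd_mul (c := ε) hdifmeas ?_
    · exact h.congr (Filter.Eventually.of_forall fun z => by ring)
    · filter_upwards [ae_abs_lt_one] with z hz
      exact hkey z hz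
  have hHRR : Integrable (fun z => H z * RR z) dA := by
    have h := (mul_abs_pow_integrable hH (2*j)).sub hHdiff
    refine h.congr (Filter.Eventually.of_forall fun z => ?_)
    simp only [Pi.sub_apply, hdif, hA]
    ring
  have hsplit : X = (∫ z, H z * dif z ∂dA) + ∫ z, H z * RR z ∂dA := by
    rw [hX, ← integral_add hHdiff hHRR]
    congr 1
    funext z
    simp only [hdif, hA]
    ring
  have hRRzero : ∫ z, H z * RR z ∂dA = 0 := by
    have hpt : ∀ z : ℂ, H z * RR z
        = ∑ i ∈ Finset.range (Q.natDegree + 1),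
            ((Q.coeff i : ℝ) : ℂ) * (H z * A z ^ (2*(P*i))) := by
      intro z
      rw [hRR]
      simp only [hA]
      rw [Polynomial.eval_eq_sum_range]
      push_cast
      rw [Finset.mul_sum]
      apply Finset.sum_congr rfl
      intro i _
      ring
    simp_rw [hpt]
    rw [integral_finset_sum]
    · apply Finset.sum_eq_zero
      intro i _
      rw [integral_const_mul]
      have := hz i
      simp only [hA]
      rw [this]
      ring
    · intro i _
      exact (mul_abs_pow_integrable hH (2*(P*i))).const_mul _
  have hfirst : ‖∫ z, H z * dif z ∂dA‖ ≤ ε * (M + 1) := by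
    have h1 : ‖∫ z, H z * dif z ∂dA‖ ≤ ∫ z, ‖H z * dif z‖ ∂dA :=
      norm_integral_le_integral_norm _
    have h2 : (∫ z, ‖H z * dif z‖ ∂dA) ≤ ∫ z, ε * ‖H z‖ ∂dA := by
      refine integral_mono_ae hHdiff.norm (hH.norm.const_mul ε) ?_
      filter_upwards [ae_abs_lt_one] with z hzlt
      rw [norm_mul]
      have := hkey z hzlt
      have hn : (0:ℝ) ≤ ‖H z‖ := norm_nonneg _
      calc ‖H z‖ * ‖dif z‖ ≤ ‖H z‖ * ε := by
            apply mul_le_mul_of_nonneg_left _ hn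
            exact this
        _ = ε * ‖H z‖ := by ring
    rw [integral_const_mul] at h2
    calc ‖∫ z, H z * dif z ∂dA‖ ≤ ε * M := h1.trans h2
      _ ≤ ε * (M + 1) := by nlinarith
  rw [hsplit, hRRzero, add_zero]
  exact hfirst

end S9

namespace S9

lemma natc_ne (m : ℕ) : ((m:ℂ)+2) ≠ 0 := by
  intro hc
  have := congrArg Complex.re hc
  simp at this
  linarith [Nat.cast_nonneg (α := ℝ) m]

lemma coef_const (φ : ℝ → ℂ) (P : ℕ) (hP : 1 ≤ P)
    (hprod : ∀ k : ℕ, (∏ i ∈ Finset.range P, coefA 1 (k+i) φ) = 1) :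
    (∀ k, coefA 1 k φ = coefA 1 0 φ) ∧ coefA 1 0 φ ≠ 0 := by
  have hne : ∀ k, coefA 1 k φ ≠ 0 := by
    intro k h0
    have h1 := hprod k
    have hmem : (0:ℕ) ∈ Finset.range P := Finset.mem_range.mpr (by omega)
    have h0' : coefA 1 (k+0) φ = 0 := by rw [Nat.add_zero]; exact h0
    have h2 : (∏ i ∈ Finset.range P, coefA 1 (k+i) φ) = 0 :=
      Finset.prod_eq_zero hmem h0'
    rw [h2] at h1
    exact zero_ne_one h1
  have hper : ∀ k, coefA 1 (k+P) φ = coefA 1 k φ := by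
    intro k
    have h1 := hprod k
    have h2 := hprod (k+1)
    have e1 : (∏ i ∈ Finset.range (P+1), coefA 1 (k+i) φ)
        = (∏ i ∈ Finset.range P, coefA 1 (k+i) φ) * coefA 1 (k+P) φ :=
      Finset.prod_range_succ _ _
    have e2 : (∏ i ∈ Finset.range (P+1), coefA 1 (k+i) φ)
        = (∏ i ∈ Finset.range P, coefA 1 (k+(i+1)) φ) * coefA 1 (k+0) φ :=
      Finset.prod_range_succ' _ _
    have e3 : (∏ i ∈ Finset.range P, coefA 1 (k+(i+1)) φ)
        = ∏ i ∈ Finset.range P, coefA 1 ((k+1)+i) φ := by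
      apply Finset.prod_congr rfl
      intro i _
      congr 1
      omega
    have e4 := e1.symm.trans e2
    rw [h1, e3, h2] at e4
    simpa using e4
  have hintg : ∀ k, Integrable (F0 1 k φ) dA := by
    intro k
    by_contra h
    apply hne k
    simp only [coefA]
    rw [if_neg h]
  set a0 := coefA 1 0 φ with ha0
  set H : ℂ → ℂ := fun z => Gfun φ z - a0 * ((‖z‖ : ℝ):ℂ)^2 with hHdef
  have hGint := G_integrable φ (hintg 0)
  have hHint : Integrable H dA := hGint.sub ((abs_pow_integrable 2).const_mul a0)
  have hmom : ∀ m : ℕ, ∫ z, H z * ((‖z‖ : ℝ):ℂ)^(2*m) ∂dA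
      = (coefA 1 m φ - a0) / ((m:ℂ)+2) := by
    intro m
    have hm2 : ((m:ℂ)+2) ≠ 0 := natc_ne m
    have i1 : Integrable (fun z => Gfun φ z * ((‖z‖ : ℝ):ℂ)^(2*m)) dA :=
      mul_abs_pow_integrable hGint (2*m)
    have i2 : Integrable (fun z => a0 * ((‖z‖ : ℝ):ℂ)^(2*m+2)) dA :=
      (abs_pow_integrable (2*m+2)).const_mul a0
    have hpt : ∀ z : ℂ, H z * ((‖z‖ : ℝ):ℂ)^(2*m)
        = Gfun φ z * ((‖z‖ : ℝ):ℂ)^(2*m)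
          - a0 * ((‖z‖ : ℝ):ℂ)^(2*m+2) := by
      intro z
      simp only [hHdef]
      ring
    simp_rw [hpt]
    rw [integral_sub i1 i2, integral_const_mul, integral_abs_pow]
    have h1 := moment_eq φ m (hintg m)
    have h2 : ∫ z, Gfun φ z * ((‖z‖ : ℝ):ℂ)^(2*m) ∂dA
        = coefA 1 m φ / ((m:ℂ)+2) := by
      rw [h1]
      field_simp
    rw [h2]
    have hden : ((2*m+2 : ℕ):ℂ) + 2 ≠ 0 := by
      intro hc
      apply natc_ne (2*m+2)
      push_cast at hc ⊢
      linear_combination hc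
    push_cast
    push_cast at hden
    rw [show (2:ℂ) * m + 2 + 2 = 2 * ((m:ℂ) + 2) by ring]
    field_simp
  have hq0 : ∀ q : ℕ, coefA 1 (P*q) φ = a0 := by
    intro q
    induction q with
    | zero => simp [ha0]
    | succ q ih =>
      have := hper (P*q)
      rw [show P*(q+1) = P*q + P by ring, this, ih]
  have hzero : ∀ q : ℕ, ∫ z, H z * ((‖z‖ : ℝ):ℂ)^(2*(P*q)) ∂dA = 0 := by
    intro q
    rw [hmom (P*q), hq0 q, sub_self, zero_div]
  have hall := moments_vanish hHint P hP hzero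
  refine ⟨fun k => ?_, hne 0⟩
  have h3 := hall k
  rw [hmom k] at h3
  rcases div_eq_zero_iff.mp h3 with h4 | h4
  · exact sub_eq_zero.mp h4
  · exact absurd h4 (natc_ne k)

lemma arith (p s n d : ℕ) (hp : 0 < p) (hs : 0 < s) (hn : 0 < n) (hd : 0 < d) (hps : p < s)
    (h : ∀ k : ℕ, ((k:ℂ)+s+1)*(2*(k:ℂ)+p+n+2)*(2*(k:ℂ)+2*p+s+d+2)
      = ((k:ℂ)+p+1)*(2*(k:ℂ)+s+d+2)*(2*(k:ℂ)+2*s+p+n+2)) :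
    n = p ∧ d = s := by
  have e0 := h 0
  have e1 := h 1
  push_cast at e0 e1
  have hsn : (s:ℂ)*n = (p:ℂ)*d := by linear_combination (e1 - e0)/2
  have key : (s:ℂ) * ((s:ℂ)-(p:ℂ)) * (((n:ℂ))^2 - ((p:ℂ))^2) = 0 := by
    linear_combination (p:ℂ) * e0
      - ((p:ℂ)*s + (p:ℂ)^2 - (s:ℂ)*n + (p:ℂ)*n + 2*p) * hsn
  have hs0 : (s:ℂ) ≠ 0 := Nat.cast_ne_zero.mpr hs.ne'
  have hsp : (s:ℂ) - (p:ℂ) ≠ 0 := by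
    rw [sub_ne_zero]
    intro hc
    have : s = p := Nat.cast_injective hc
    omega
  have hnp2 : ((n:ℂ))^2 - ((p:ℂ))^2 = 0 := by
    rcases mul_eq_zero.mp key with h1 | h1
    · rcases mul_eq_zero.mp h1 with h2 | h2
      · exact absurd h2 hs0
      · exact absurd h2 hsp
    · exact h1
  have hnpsum : (n:ℂ) + (p:ℂ) ≠ 0 := by
    have : ((n+p : ℕ) : ℂ) ≠ 0 := Nat.cast_ne_zero.mpr (by omega)
    push_cast at this
    exact this
  have hnp : (n:ℂ) = (p:ℂ) := by
    have hfac : ((n:ℂ) - p) * ((n:ℂ) + p) = 0 := by linear_combination hnp2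
    rcases mul_eq_zero.mp hfac with h1 | h1
    · linear_combination h1
    · exact absurd h1 hnpsum
  have hne : n = p := Nat.cast_injective hnp
  have hp0 : (p:ℂ) ≠ 0 := Nat.cast_ne_zero.mpr hp.ne'
  have hds : (d:ℂ) = (s:ℂ) := by
    have h5 : (p:ℂ) * d = (p:ℂ) * s := by linear_combination -hsn + (s:ℂ) * hnp
    exact mul_left_cancel₀ hp0 h5
  exact ⟨hne, Nat.cast_injective hds⟩

end S9


open S9

/-- Let `p, s, n, d` be positive integers with `p < s` and suppose
`T_{e^{ipθ}r^n}` commutes with `T_{e^{isθ}r^d}` on every monomial `z^k`.  If `φ̃` and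
`ψ̃` are radial functions with `T_{e^{ipθ}r^n} = (T_{e^{iθ}φ̃})^p` and
`T_{e^{isθ}r^d} = (T_{e^{iθ}ψ̃})^s`, then there is a constant `c` such that
`T_{e^{iθ}ψ̃}(z^k) = c·T_{e^{iθ}φ̃}(z^k)` for all `k ≥ 0`. -/
theorem statement9 (p s n d : ℕ) (hp : 0 < p) (hs : 0 < s) (hn : 0 < n) (hd : 0 < d)
    (hps : p < s)
    (hcomm : ∀ k : ℕ, Set.EqOn (Tq p (rpw n) (Tq s (rpw d) (mono k)))
      (Tq s (rpw d) (Tq p (rpw n) (mono k))) (ball (0 : ℂ) 1))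
    (φt ψt : ℝ → ℂ)
    (hroot₁ : ∀ k : ℕ, Set.EqOn (Tq p (rpw n) (mono k)) ((Tq 1 φt)^[p] (mono k))
      (ball (0 : ℂ) 1))
    (hroot₂ : ∀ k : ℕ, Set.EqOn (Tq s (rpw d) (mono k)) ((Tq 1 ψt)^[s] (mono k))
      (ball (0 : ℂ) 1)) :
    ∃ c : ℂ, ∀ k : ℕ, Set.EqOn (Tq 1 ψt (mono k))
      (fun w : ℂ => c * (Tq 1 φt (mono k) w)) (ball (0 : ℂ) 1) := by
  -- Step 1: coefficient form of the commutation relation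
  have hcoef : ∀ k : ℕ, coefA s k (rpw d) * coefA p (k+s) (rpw n)
      = coefA p k (rpw n) * coefA s (k+p) (rpw d) := by
    intro k
    apply const_mono_inj (m := k+s+p)
    intro w hw
    have hg1 : Set.EqOn (Tq s (rpw d) (mono k))
        (fun z => coefA s k (rpw d) * mono (k+s) z) (ball (0:ℂ) 1) := by
      intro z hz
      exact Tq_mono_eq s k hs (rpw d) hz
    have hg2 : Set.EqOn (Tq p (rpw n) (mono k))
        (fun z => coefA p k (rpw n) * mono (k+p) z) (ball (0:ℂ) 1) := by
      intro z hz
      exact Tq_mono_eq p k hp (rpw n) hz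
    have hL := Tq_const_mono p (k+s) hp (rpw n) hg1 hw
    have hR := Tq_const_mono s (k+p) hs (rpw d) hg2 hw
    have hc := hcomm k hw
    rw [hL, hR] at hc
    calc (coefA s k (rpw d) * coefA p (k+s) (rpw n)) * w ^ (k+s+p)
        = coefA s k (rpw d) * (coefA p (k+s) (rpw n) * w ^ ((k+s)+p)) := by ring
      _ = coefA p k (rpw n) * (coefA s (k+p) (rpw d) * w ^ ((k+p)+s)) := hc
      _ = (coefA p k (rpw n) * coefA s (k+p) (rpw d)) * w ^ (k+s+p) := by
          rw [show (k+p)+s = k+s+p by omega]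
          ring
  -- Step 2: the cubic identity, then n = p, d = s
  have hval : ∀ k : ℕ, ((k:ℂ)+s+1)*(2*(k:ℂ)+p+n+2)*(2*(k:ℂ)+2*p+s+d+2)
      = ((k:ℂ)+p+1)*(2*(k:ℂ)+s+d+2)*(2*(k:ℂ)+2*s+p+n+2) := by
    intro k
    have h := hcoef k
    rw [coefA_rpw s k d hs, coefA_rpw p (k+s) n hp, coefA_rpw p k n hp,
      coefA_rpw s (k+p) d hs] at h
    push_cast at h
    have w1 : 2*(k:ℂ)+s+d+2 ≠ 0 := by
      intro hc; apply natc_ne (2*k+s+d); push_cast; linear_combination hc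
    have w2 : 2*((k:ℂ)+s)+p+n+2 ≠ 0 := by
      intro hc; apply natc_ne (2*(k+s)+p+n); push_cast; linear_combination hc
    have w3 : 2*(k:ℂ)+p+n+2 ≠ 0 := by
      intro hc; apply natc_ne (2*k+p+n); push_cast; linear_combination hc
    have w4 : 2*((k:ℂ)+p)+s+d+2 ≠ 0 := by
      intro hc; apply natc_ne (2*(k+p)+s+d); push_cast; linear_combination hc
    have hfac : (4:ℂ)*((k:ℂ)+s+p+1) ≠ 0 := by
      apply mul_ne_zero (by norm_num)
      intro hc
      have : ((k+s+p : ℕ) : ℂ) + 1 = 0 := by push_cast; linear_combination hc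
      have h2 := congrArg Complex.re this
      simp at h2
      linarith [Nat.cast_nonneg (α := ℝ) (k+s+p)]
    field_simp at h
    apply mul_left_cancel₀ hfac
    linear_combination 4 * h
  obtain ⟨hnp, hds⟩ := arith p s n d hp hs hn hd hps hval
  rw [hnp] at hroot₁
  rw [hds] at hroot₂
  -- Step 3: products of root coefficients are 1
  have hprod1 : ∀ k : ℕ, (∏ i ∈ Finset.range p, coefA 1 (k+i) φt) = 1 := by
    intro k
    have hkey : coefA p k (rpw p) = ∏ i ∈ Finset.range p, coefA 1 (k+i) φt := by
      apply const_mono_inj (m := k+p)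
      intro w hw
      rw [← Tq_mono_eq p k hp (rpw p) hw, hroot₁ k hw, iterate_Tq φt p k hw]
    rw [← hkey, coefA_rpw p k p hp]
    have hden : 2*(k:ℂ)+p+p+2 ≠ 0 := by
      intro hc; apply natc_ne (2*k+p+p); push_cast; linear_combination hc
    field_simp
    ring
  have hprod2 : ∀ k : ℕ, (∏ i ∈ Finset.range s, coefA 1 (k+i) ψt) = 1 := by
    intro k
    have hkey : coefA s k (rpw s) = ∏ i ∈ Finset.range s, coefA 1 (k+i) ψt := by
      apply const_mono_inj (m := k+s)
      intro w hw
      rw [← Tq_mono_eq s k hs (rpw s) hw, hroot₂ k hw, iterate_Tq ψt s k hw]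
    rw [← hkey, coefA_rpw s k s hs]
    have hden : 2*(k:ℂ)+s+s+2 ≠ 0 := by
      intro hc; apply natc_ne (2*k+s+s); push_cast; linear_combination hc
    field_simp
    ring
  obtain ⟨hconst1, hne1⟩ := coef_const φt p hp hprod1
  obtain ⟨hconst2, hne2⟩ := coef_const ψt s hs hprod2
  refine ⟨coefA 1 0 ψt / coefA 1 0 φt, fun k => ?_⟩
  intro w hw
  have hψ : Tq 1 ψt (mono k) w = coefA 1 k ψt * w^(k+1) := Tq_mono_eq 1 k le_rfl ψt hw
  have hφ : Tq 1 φt (mono k) w = coefA 1 k φt * w^(k+1) := Tq_mono_eq 1 k le_rfl φt hw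
  simp only
  rw [hψ, hφ, hconst1 k, hconst2 k]
  field_simp
end
end

section
/- Let φ ∈ L¹([0,1), r dr) and let (z_k) be a sequence of pairwise distinct complex numbers with Re z_k ≥ c for some c > 2 and Σ_k Re(1/z_k) = ∞ (for example, an arithmetic progression z_k = a + bk with a > 2, b > 0). If the Mellin transform satisfies φ̂(z_k) = 0 for all k, then φ̂ vanishes identically on {z ∈ ℂ : Re z > 2}. -/
open MeasureTheory Set Filter Complex

noncomputable section

lemma mellinT_eq (φ : ℝ → ℂ) (z : ℂ) :
    mellinT φ z = ∫ r in Ioo (0 : ℝ) 1, (φ r * (r : ℂ)) * (r : ℂ) ^ (z - 1) := by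
  unfold mellinT
  refine integral_congr_ae (Eventually.of_forall fun r => ?_)
  ring


lemma mellinT_bound (φ : ℝ → ℂ) (hφ : MemL1rdr φ) {z : ℂ} (hz : 1 ≤ z.re) :
    ‖mellinT φ z‖ ≤ ∫ r in Ioo (0 : ℝ) 1, ‖φ r * (r : ℂ)‖ := by
  rw [mellinT_eq]
  refine norm_integral_le_of_norm_le hφ.norm ?_
  filter_upwards [ae_restrict_mem measurableSet_Ioo] with r hr
  rw [norm_mul]
  refine mul_le_of_le_one_right (norm_nonneg _) ?_
  rw [Complex.norm_cpow_eq_rpow_re_of_pos hr.1]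
  exact Real.rpow_le_one hr.1.le hr.2.le (by simp; linarith)

lemma mellinT_diff (φ : ℝ → ℂ) (hφ : MemL1rdr φ) :
    DifferentiableOn ℂ (mellinT φ) {z : ℂ | 1 < z.re} := by
  have hop : IsOpen {z : ℂ | 1 < z.re} := isOpen_lt continuous_const Complex.continuous_re
  intro z₀ hz₀
  simp only [mem_setOf_eq] at hz₀
  set ε := (z₀.re - 1) / 2 with hε
  have hεpos : 0 < ε := by simp [hε]; linarith
  have key : HasDerivAt (fun z => ∫ r in Ioo (0:ℝ) 1, (φ r * (r : ℂ)) * (r : ℂ) ^ (z - 1))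
      (∫ r in Ioo (0:ℝ) 1, (φ r * (r : ℂ)) * ((r : ℂ) ^ (z₀ - 1) * Complex.log r)) z₀ := by
    refine (hasDerivAt_integral_of_dominated_loc_of_deriv_le (F := fun z r =>
        (φ r * (r : ℂ)) * (r : ℂ) ^ (z - 1))
        (F' := fun z r => (φ r * (r : ℂ)) * ((r : ℂ) ^ (z - 1) * Complex.log r))
        (bound := fun r => ‖φ r * (r : ℂ)‖ * (1 / ε)) (Metric.ball_mem_nhds z₀ hεpos) ?_ ?_ ?_ ?_ ?_ ?_).2
    · refine Eventually.of_forall fun z => ?_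
      refine hφ.aestronglyMeasurable.mul ?_
      refine ContinuousOn.aestronglyMeasurable (fun r hr => ?_) measurableSet_Ioo
      exact ((continuous_ofReal.continuousAt).cpow continuousAt_const
        (Or.inl (by simpa using hr.1))).continuousWithinAt
    · -- integrability at z₀
      refine Integrable.mono hφ ?_ ?_
      · refine hφ.aestronglyMeasurable.mul ?_
        refine ContinuousOn.aestronglyMeasurable (fun r hr => ?_) measurableSet_Ioo
        exact ((continuous_ofReal.continuousAt).cpow continuousAt_const
          (Or.inl (by simpa using hr.1))).continuousWithinAt
      · filter_upwards [ae_restrict_mem measurableSet_Ioo] with r hr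
        rw [norm_mul]
        refine mul_le_of_le_one_right (norm_nonneg _) ?_
        rw [Complex.norm_cpow_eq_rpow_re_of_pos hr.1]
        exact Real.rpow_le_one hr.1.le hr.2.le (by simp; linarith)
    · refine hφ.aestronglyMeasurable.mul ?_
      refine ContinuousOn.aestronglyMeasurable (fun r hr => ?_) measurableSet_Ioo
      refine ContinuousWithinAt.mul ?_ ?_
      · exact ((continuous_ofReal.continuousAt).cpow continuousAt_const
          (Or.inl (by simpa using hr.1))).continuousWithinAt
      · exact ((continuousAt_clog (by simpa using hr.1)).comp
          continuous_ofReal.continuousAt).continuousWithinAt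
    · filter_upwards [ae_restrict_mem measurableSet_Ioo] with r hr z hz
      have hr0 : (0:ℝ) < r := hr.1
      have hre : ε ≤ (z - 1).re := by
        have hz' := Metric.mem_ball.1 hz
        rw [Complex.dist_eq] at hz'
        have h1 : |(z - z₀).re| ≤ ‖z - z₀‖ := Complex.abs_re_le_norm _
        have h2 := (abs_le.1 (h1.trans hz'.le)).1
        simp only [Complex.sub_re, Complex.one_re] at h2 ⊢
        have hε2 : z₀.re - 1 = 2 * ε := by rw [hε]; ring
        linarith
      rw [norm_mul]
      refine mul_le_mul_of_nonneg_left ?_ (norm_nonneg _)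
      rw [norm_mul, Complex.norm_cpow_eq_rpow_re_of_pos hr0,
        ← Complex.ofReal_log hr0.le, Complex.norm_real, Real.norm_eq_abs]
      have h1 : r ^ (z - 1).re ≤ r ^ ε :=
        Real.rpow_le_rpow_of_exponent_ge hr0 hr.2.le hre
      calc r ^ (z - 1).re * |Real.log r| ≤ r ^ ε * |Real.log r| := by
            exact mul_le_mul_of_nonneg_right h1 (abs_nonneg _)
        _ ≤ 1 / ε := by
            have h3 := Real.abs_log_mul_self_rpow_lt r ε hr0 hr.2.le hεpos
            rw [abs_mul, abs_of_pos (Real.rpow_pos_of_pos hr0 ε)] at h3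
            rw [mul_comm]
            exact h3.le
    · exact hφ.norm.mul_const _
    · filter_upwards [ae_restrict_mem measurableSet_Ioo] with r hr z _
      have hr0 : ((r : ℂ)) ≠ 0 := by
        simpa using ne_of_gt hr.1
      have : HasDerivAt (fun z : ℂ => (r : ℂ) ^ (z - 1))
          ((r : ℂ) ^ (z - 1) * Complex.log r * 1) z :=
        HasDerivAt.const_cpow ((hasDerivAt_id z).sub_const 1) (Or.inl hr0)
      rw [mul_one] at this
      exact this.const_mul _
  have : HasDerivAt (mellinT φ) _ z₀ := key.congr_of_eventuallyEq
    ((hop.eventually_mem hz₀).mono fun z _ => (mellinT_eq φ z))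
  exact this.differentiableAt.differentiableWithinAt


lemma halfplane_max {f : ℂ → ℂ} {C B R : ℝ}
    (hd : DifferentiableOn ℂ f {z : ℂ | 1 < z.re})
    (hB : ∀ z : ℂ, 2 ≤ z.re → R ≤ ‖z‖ → ‖f z‖ ≤ B)
    (hC : ∀ y : ℝ, ‖f (2 + y * I)‖ ≤ C) :
    ∀ z : ℂ, 2 ≤ z.re → ‖f z‖ ≤ C := by
  set g : ℂ → ℂ := fun w => f (w + 2) with hg
  have hop : IsOpen {z : ℂ | 1 < z.re} := isOpen_lt continuous_const Complex.continuous_re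
  have hgd : DifferentiableOn ℂ g {w : ℂ | -1 < w.re} := by
    intro w hw
    have h2 : (w + 2) ∈ {z : ℂ | 1 < z.re} := by
      simp only [mem_setOf_eq] at hw ⊢
      simp [Complex.add_re]; linarith
    exact (((hd (w + 2) h2).differentiableAt (hop.mem_nhds h2)).comp w
      ((differentiableAt_id).add_const 2)).differentiableWithinAt
  have key : ∀ w : ℂ, 0 ≤ w.re → ‖g w‖ ≤ C := by
    intro w hw
    refine PhragmenLindelof.right_half_plane_of_bounded_on_real ?_ ?_ ?_ ?_ hw
    · refine DifferentiableOn.diffContOnCl ?_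
      refine hgd.mono fun u hu => ?_
      have := closure_lt_subset_le continuous_const Complex.continuous_re hu
      simp only [mem_setOf_eq] at this ⊢
      linarith
    · refine ⟨1, one_lt_two, 0, ?_⟩
      rw [Asymptotics.isBigO_iff]
      refine ⟨max B 0, ?_⟩
      rw [eventually_inf_principal]
      filter_upwards [eventually_cobounded_le_norm (R + 2)] with u hu hu'
      have h1 : (2:ℝ) ≤ (u + 2).re := by
        rw [Complex.add_re]
        norm_num
        linarith
      have h2 : R ≤ ‖u + 2‖ := by
        have h3 : ‖u‖ ≤ ‖u + 2‖ + 2 := by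
          calc ‖u‖ = ‖(u + 2) + (-2)‖ := by ring_nf
            _ ≤ ‖u + 2‖ + ‖-2‖ := norm_add_le _ _
            _ = ‖u + 2‖ + 2 := by norm_num
        have h4 : R + 2 ≤ ‖u‖ := hu
        linarith
      have := hB (u + 2) h1 h2
      simp only [Real.rpow_one, zero_mul, Real.exp_zero, norm_one, mul_one]
      exact this.trans (le_max_left _ _)
    · refine ⟨B, ?_⟩
      rw [eventually_map]
      filter_upwards [eventually_ge_atTop (max R 0)] with x hx
      have h1 : (2:ℝ) ≤ ((x:ℂ) + 2).re := by
        simp [Complex.add_re]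
        exact le_trans (le_max_right R 0) hx
      have h2 : R ≤ ‖(x:ℂ) + 2‖ := by
        refine le_trans ?_ (Complex.re_le_norm _)
        simp [Complex.add_re]
        have := le_trans (le_max_left R 0) hx
        linarith
      exact hB _ h1 h2
    · intro y
      have : (y:ℂ) * I + 2 = 2 + y * I := by ring
      simp only [hg, this]
      exact hC y
  intro z hz
  have : g (z - 2) = f z := by simp [hg]
  rw [← this]
  refine key (z - 2) ?_
  simp [Complex.sub_re]; linarith


lemma blaschke_step {g : ℂ → ℂ} {w : ℂ} {M : ℝ} (hw : 2 < w.re)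
    (hd : DifferentiableOn ℂ g {z : ℂ | 1 < z.re})
    (hb : ∀ z : ℂ, 2 ≤ z.re → ‖g z‖ ≤ M) (hgw : g w = 0) :
    DifferentiableOn ℂ (fun z => dslope g w z * (z + (starRingEnd ℂ) w - 4)) {z : ℂ | 1 < z.re}
    ∧ ∀ z : ℂ, 2 ≤ z.re → ‖dslope g w z * (z + (starRingEnd ℂ) w - 4)‖ ≤ M := by
  have hM : 0 ≤ M := le_trans (norm_nonneg _) (hb 2 (by norm_num))
  have hwmem : {z : ℂ | 1 < z.re} ∈ nhds w := by
    refine (isOpen_lt continuous_const Complex.continuous_re).mem_nhds ?_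
    simp only [mem_setOf_eq]; linarith
  have hdiff : DifferentiableOn ℂ (fun z => dslope g w z * (z + (starRingEnd ℂ) w - 4))
      {z : ℂ | 1 < z.re} := by
    refine DifferentiableOn.mul ?_ ?_
    · exact (differentiableOn_dslope hwmem).2 hd
    · exact ((differentiable_id.add_const _).sub_const _).differentiableOn
  refine ⟨hdiff, ?_⟩
  -- norm formula away from w
  have habs : ∀ z : ℂ, z ≠ w →
      ‖dslope g w z * (z + (starRingEnd ℂ) w - 4)‖
        = ‖g z‖ * (‖z + (starRingEnd ℂ) w - 4‖ / ‖z - w‖) := by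
    intro z hzw
    rw [dslope_of_ne g hzw, slope_def_field, hgw, sub_zero]
    rw [norm_mul, norm_div]
    ring
  refine halfplane_max (B := M * (2 * ‖w‖ + 5)) (R := ‖w‖ + 3) hdiff ?_ ?_
  · -- bound far away
    intro z h2 hR
    have hzw : z ≠ w := by
      intro h; rw [h] at hR; linarith
    have hd1 : (1:ℝ) ≤ ‖z - w‖ := by
      have := norm_add_le (z - w) w
      simp only [sub_add_cancel] at this
      linarith
    rw [habs z hzw]
    have e2 : ‖w + (starRingEnd ℂ) w - 4‖ ≤ 2 * ‖w‖ + 4 := by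
      have e3 : w + (starRingEnd ℂ) w - 4 = (((2 * w.re - 4 : ℝ)) : ℂ) := by
        rw [Complex.add_conj]
        push_cast
        ring
      rw [e3, Complex.norm_real, Real.norm_eq_abs]
      have h4 : |w.re| ≤ ‖w‖ := Complex.abs_re_le_norm w
      rw [abs_le] at h4 ⊢
      constructor <;> nlinarith [norm_nonneg w]
    have hnum : ‖z + (starRingEnd ℂ) w - 4‖
        ≤ (2 * ‖w‖ + 5) * ‖z - w‖ := by
      have e1 : z + (starRingEnd ℂ) w - 4 = (z - w) + (w + (starRingEnd ℂ) w - 4) := by ring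
      have e4 := norm_add_le (z - w) (w + (starRingEnd ℂ) w - 4)
      rw [← e1] at e4
      nlinarith [norm_nonneg w]
    have hpos : 0 < ‖z - w‖ := lt_of_lt_of_le one_pos hd1
    have hq : ‖z + (starRingEnd ℂ) w - 4‖ / ‖z - w‖
        ≤ 2 * ‖w‖ + 5 := by
      rw [div_le_iff₀ hpos]; linarith
    exact mul_le_mul (hb z h2) hq (by positivity) hM
  · -- boundary
    intro y
    have hzw : (2 : ℂ) + y * I ≠ w := by
      intro h
      have : ((2:ℂ) + y * I).re = w.re := by rw [h]
      simp [Complex.add_re, Complex.mul_re] at this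
      linarith
    rw [habs _ hzw]
    have heq : ‖(2 : ℂ) + y * I + (starRingEnd ℂ) w - 4‖
        = ‖(2 : ℂ) + y * I - w‖ := by
      rw [← Complex.norm_conj ((2 : ℂ) + y * I + (starRingEnd ℂ) w - 4)]
      have e5 : (starRingEnd ℂ) ((2 : ℂ) + y * I + (starRingEnd ℂ) w - 4)
          = w - ((2 : ℂ) + y * I) := by
        apply Complex.ext <;> simp <;> ring
      rw [e5, norm_sub_rev]
    rw [heq]
    have hpos : 0 < ‖(2 : ℂ) + y * I - w‖ := by
      rw [norm_pos_iff]
      exact sub_ne_zero.2 hzw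
    rw [div_self (ne_of_gt hpos), mul_one]
    exact hb _ (by simp [Complex.add_re, Complex.mul_re])


def blaschkeSeq (zs : ℕ → ℂ) (f : ℂ → ℂ) : ℕ → ℂ → ℂ
  | 0 => f
  | (N + 1) => fun z =>
      dslope (blaschkeSeq zs f N) (zs N) z * (z + (starRingEnd ℂ) (zs N) - 4)

set_option maxHeartbeats 2000000

/-- Let `φ ∈ L¹([0,1), r dr)` and let `(z_k)` be a sequence of pairwise
distinct complex numbers with `Re z_k ≥ c` for some `c > 2` and `Σ_k Re(1/z_k) = ∞`.
If `φ̂(z_k) = 0` for all `k`, then `φ̂` vanishes identically on `{z : Re z > 2}`. -/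
theorem statement12 (φ : ℝ → ℂ) (hφ : MemL1rdr φ)
    (zs : ℕ → ℂ) (hinj : Function.Injective zs)
    (c : ℝ) (hc : 2 < c) (hre : ∀ k, c ≤ (zs k).re)
    (hdiv : Tendsto (fun N => ∑ k ∈ Finset.range N, ((zs k)⁻¹).re) atTop atTop)
    (hzero : ∀ k, mellinT φ (zs k) = 0) :
    ∀ z : ℂ, 2 < z.re → mellinT φ z = 0 := by
  set f := mellinT φ with hf
  set M := ∫ r in Ioo (0 : ℝ) 1, ‖φ r * (r : ℂ)‖ with hMdef
  have hM : 0 ≤ M := integral_nonneg fun r => norm_nonneg _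
  have hfd : DifferentiableOn ℂ f {u : ℂ | 1 < u.re} := mellinT_diff φ hφ
  have hfb : ∀ u : ℂ, 2 ≤ u.re → ‖f u‖ ≤ M := fun u hu =>
    mellinT_bound φ hφ (le_trans one_le_two hu)
  set F := blaschkeSeq zs f with hF
  -- basic properties by induction
  have hprop : ∀ N, DifferentiableOn ℂ (F N) {u : ℂ | 1 < u.re} ∧
      (∀ k, N ≤ k → F N (zs k) = 0) ∧ (∀ u : ℂ, 2 ≤ u.re → ‖F N u‖ ≤ M) := by
    intro N
    induction N with
    | zero => exact ⟨hfd, fun k _ => hzero k, hfb⟩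
    | succ N ih =>
      obtain ⟨h1, h2, h3⟩ := ih
      have hwre : 2 < (zs N).re := lt_of_lt_of_le hc (hre N)
      have hstep := blaschke_step hwre h1 h3 (h2 N le_rfl)
      refine ⟨hstep.1, ?_, hstep.2⟩
      intro k hk
      show dslope (F N) (zs N) (zs k) * (zs k + (starRingEnd ℂ) (zs N) - 4) = 0
      have hne : zs k ≠ zs N := by
        intro h
        have := hinj h
        omega
      rw [dslope_of_ne _ hne, slope_def_field, h2 k (Nat.le_of_succ_le hk), h2 N le_rfl]
      simp
  -- the product identity
  have hiden : ∀ N, ∀ u : ℂ, F N u * ∏ k ∈ Finset.range N, (u - zs k)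
      = f u * ∏ k ∈ Finset.range N, (u + (starRingEnd ℂ) (zs k) - 4) := by
    intro N
    induction N with
    | zero => intro u; simp [hF, blaschkeSeq]
    | succ N ih =>
      intro u
      have hkey : dslope (F N) (zs N) u * (u - zs N) = F N u := by
        have h0 := sub_smul_dslope (F N) (zs N) u
        rw [(hprop N).2.1 N le_rfl, sub_zero, smul_eq_mul] at h0
        linear_combination h0
      have hFs : F (N + 1) u
          = dslope (F N) (zs N) u * (u + (starRingEnd ℂ) (zs N) - 4) := rfl
      rw [hFs, Finset.prod_range_succ, Finset.prod_range_succ]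
      linear_combination (u + (starRingEnd ℂ) (zs N) - 4) * (∏ k ∈ Finset.range N, (u - zs k)) * hkey
        + (u + (starRingEnd ℂ) (zs N) - 4) * ih u
  -- final estimate
  intro z hz
  set x := z.re with hx
  set K := 1 + ‖z - 4‖ / c with hK
  have hc0 : (0:ℝ) < c := by linarith
  have hK1 : (1:ℝ) ≤ K := by
    rw [hK]
    have : 0 ≤ ‖z - 4‖ / c := div_nonneg (norm_nonneg _) hc0.le
    linarith
  have hK0 : (0:ℝ) < K := lt_of_lt_of_le one_pos hK1
  set δ := 4 * (x - 2) * (1 - 2 / c) / K ^ 2 with hδdef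
  have h2c : 2 / c < 1 := by rw [div_lt_one hc0]; linarith
  have hδ : 0 < δ := by
    rw [hδdef]
    have h1 : 0 < x - 2 := by linarith
    have h2 : 0 < 1 - 2 / c := by linarith
    positivity
  -- per-index facts
  have hfacts : ∀ k : ℕ,
      0 < ‖z + (starRingEnd ℂ) (zs k) - 4‖ ∧
      ‖z - zs k‖ ^ 2
        ≤ ‖z + (starRingEnd ℂ) (zs k) - 4‖ ^ 2 * (1 - δ * ((zs k)⁻¹).re) ∧
      0 ≤ 1 - δ * ((zs k)⁻¹).re ∧ 0 ≤ δ * ((zs k)⁻¹).re := by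
    intro k
    set a := (zs k).re with ha
    have hak : c ≤ a := hre k
    have habs : c ≤ ‖zs k‖ := le_trans hak (Complex.re_le_norm _)
    have hnsq : 0 < Complex.normSq (zs k) := by
      rw [Complex.normSq_pos]
      intro h
      have h6 := hre k
      rw [h] at h6
      simp at h6
      linarith
    have hu : ((zs k)⁻¹).re = a / Complex.normSq (zs k) := Complex.inv_re (zs k)
    have hu0 : 0 < ((zs k)⁻¹).re := by
      rw [hu]
      exact div_pos (by linarith) hnsq
    have hD0 : 0 < ‖z + (starRingEnd ℂ) (zs k) - 4‖ := by
      have : x + a - 4 ≤ (z + (starRingEnd ℂ) (zs k) - 4).re := by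
        simp [Complex.add_re, Complex.sub_re, Complex.conj_re]
        exact le_rfl
      refine lt_of_lt_of_le ?_ (le_trans this (Complex.re_le_norm _))
      linarith
    -- the key identity
    have hiden2 : ‖z - zs k‖ ^ 2
        = ‖z + (starRingEnd ℂ) (zs k) - 4‖ ^ 2 - 4 * (x - 2) * (a - 2) := by
      rw [Complex.sq_norm, Complex.sq_norm]
      simp only [Complex.normSq_apply, Complex.sub_re, Complex.sub_im, Complex.add_re,
        Complex.add_im, Complex.conj_re, Complex.conj_im]
      norm_num
      ring
    -- bound D ≤ K * abs (zs k)
    have hDle : ‖z + (starRingEnd ℂ) (zs k) - 4‖ ≤ K * ‖zs k‖ := by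
      have e1 : z + (starRingEnd ℂ) (zs k) - 4 = (z - 4) + (starRingEnd ℂ) (zs k) := by ring
      rw [e1]
      refine le_trans (norm_add_le _ _) ?_
      rw [Complex.norm_conj, hK]
      have h5 : ‖z - 4‖ ≤ ‖z - 4‖ / c * ‖zs k‖ := by
        rw [div_mul_eq_mul_div, le_div_iff₀ hc0]
        exact mul_le_mul_of_nonneg_left habs (norm_nonneg _)
      nlinarith [norm_nonneg (zs k)]
    have hsq : ‖z + (starRingEnd ℂ) (zs k) - 4‖ ^ 2
        ≤ K ^ 2 * Complex.normSq (zs k) := by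
      rw [← Complex.sq_norm]
      calc ‖z + (starRingEnd ℂ) (zs k) - 4‖ ^ 2
          ≤ (K * ‖zs k‖) ^ 2 := by
            refine pow_le_pow_left₀ (norm_nonneg _) hDle 2
        _ = K ^ 2 * ‖zs k‖ ^ 2 := by ring
    -- key inequality: δ * u * D^2 ≤ 4 (x-2)(a-2)
    have hkey : δ * ((zs k)⁻¹).re * ‖z + (starRingEnd ℂ) (zs k) - 4‖ ^ 2
        ≤ 4 * (x - 2) * (a - 2) := by
      have e2 : δ * ((zs k)⁻¹).re * (K ^ 2 * Complex.normSq (zs k))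
          = 4 * (x - 2) * ((1 - 2 / c) * a) := by
        rw [hu, hδdef]
        field_simp
      have e3 : (1 - 2 / c) * a ≤ a - 2 := by
        have : (1:ℝ) ≤ a / c := (one_le_div hc0).2 hak
        have h7 : 2 ≤ 2 * (a / c) := by linarith
        have h8 : (1 - 2 / c) * a = a - 2 * (a / c) := by field_simp
        linarith
      have e4 : δ * ((zs k)⁻¹).re * ‖z + (starRingEnd ℂ) (zs k) - 4‖ ^ 2
          ≤ δ * ((zs k)⁻¹).re * (K ^ 2 * Complex.normSq (zs k)) := by
        refine mul_le_mul_of_nonneg_left hsq ?_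
        positivity
      have h9 : 0 < x - 2 := by linarith
      nlinarith
    have hmain : ‖z - zs k‖ ^ 2
        ≤ ‖z + (starRingEnd ℂ) (zs k) - 4‖ ^ 2 * (1 - δ * ((zs k)⁻¹).re) := by
      rw [hiden2]
      nlinarith
    have hnn : 0 ≤ 1 - δ * ((zs k)⁻¹).re := by
      by_contra hcon
      push_neg at hcon
      have h11 := mul_neg_of_pos_of_neg (pow_pos hD0 2) hcon
      have h12 := sq_nonneg (‖z - zs k‖)
      linarith
    exact ⟨hD0, hmain, hnn, mul_nonneg hδ.le hu0.le⟩
  -- now the product estimate for each N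
  have hNbound : ∀ N : ℕ, ‖f z‖ ^ 2
      ≤ M ^ 2 * Real.exp (-(δ * ∑ k ∈ Finset.range N, ((zs k)⁻¹).re)) := by
    intro N
    set P := ∏ k ∈ Finset.range N, ‖z + (starRingEnd ℂ) (zs k) - 4‖ with hP
    have hPpos : 0 < P := Finset.prod_pos fun k _ => (hfacts k).1
    have hnorm : ‖f z‖ * P = ‖F N z‖ * ∏ k ∈ Finset.range N, ‖z - zs k‖ := by
      have := congrArg norm (hiden N z)
      rw [norm_mul, norm_mul, norm_prod, norm_prod] at this
      rw [hP]
      linarith [this]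
    have hFb : ‖F N z‖ ≤ M := (hprop N).2.2 z hz.le
    have step1 : (‖f z‖ * P) ^ 2
        ≤ M ^ 2 * ∏ k ∈ Finset.range N, ‖z - zs k‖ ^ 2 := by
      rw [hnorm, mul_pow, ← Finset.prod_pow]
      refine mul_le_mul_of_nonneg_right ?_ ?_
      · exact pow_le_pow_left₀ (norm_nonneg _) hFb 2
      · exact Finset.prod_nonneg fun k _ => sq_nonneg _
    have step2 : ∏ k ∈ Finset.range N, ‖z - zs k‖ ^ 2
        ≤ ∏ k ∈ Finset.range N,
          (‖z + (starRingEnd ℂ) (zs k) - 4‖ ^ 2 * (1 - δ * ((zs k)⁻¹).re)) := by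
      refine Finset.prod_le_prod (fun k _ => sq_nonneg _) fun k _ => (hfacts k).2.1
    have step3 : ∏ k ∈ Finset.range N,
          (‖z + (starRingEnd ℂ) (zs k) - 4‖ ^ 2 * (1 - δ * ((zs k)⁻¹).re))
        = P ^ 2 * ∏ k ∈ Finset.range N, (1 - δ * ((zs k)⁻¹).re) := by
      rw [Finset.prod_mul_distrib, hP, Finset.prod_pow]
    have step4 : ∏ k ∈ Finset.range N, (1 - δ * ((zs k)⁻¹).re)
        ≤ Real.exp (-(δ * ∑ k ∈ Finset.range N, ((zs k)⁻¹).re)) := by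
      have e6 : -(δ * ∑ k ∈ Finset.range N, ((zs k)⁻¹).re)
          = ∑ k ∈ Finset.range N, -(δ * ((zs k)⁻¹).re) := by
        rw [Finset.mul_sum, ← Finset.sum_neg_distrib]
      rw [e6, Real.exp_sum]
      refine Finset.prod_le_prod (fun k _ => (hfacts k).2.2.1) fun k _ => ?_
      have := Real.add_one_le_exp (-(δ * ((zs k)⁻¹).re))
      linarith
    have final : ‖f z‖ ^ 2 * P ^ 2
        ≤ M ^ 2 * Real.exp (-(δ * ∑ k ∈ Finset.range N, ((zs k)⁻¹).re)) * P ^ 2 := by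
      calc ‖f z‖ ^ 2 * P ^ 2 = (‖f z‖ * P) ^ 2 := by ring
        _ ≤ M ^ 2 * ∏ k ∈ Finset.range N, ‖z - zs k‖ ^ 2 := step1
        _ ≤ M ^ 2 * (P ^ 2 * ∏ k ∈ Finset.range N, (1 - δ * ((zs k)⁻¹).re)) := by
            rw [← step3]
            exact mul_le_mul_of_nonneg_left step2 (by positivity)
        _ ≤ M ^ 2 * Real.exp (-(δ * ∑ k ∈ Finset.range N, ((zs k)⁻¹).re)) * P ^ 2 := by
            have h10 := mul_le_mul_of_nonneg_left step4 (pow_nonneg hM 2)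
            nlinarith [pow_pos hPpos 2, pow_nonneg hM 2]
    have hP2 : 0 < P ^ 2 := pow_pos hPpos 2
    exact le_of_mul_le_mul_right (by linarith [final]) hP2
  -- take N → ∞
  have hlim : Tendsto (fun N => M ^ 2 *
      Real.exp (-(δ * ∑ k ∈ Finset.range N, ((zs k)⁻¹).re))) atTop (nhds 0) := by
    have h1 : Tendsto (fun N => -(δ * ∑ k ∈ Finset.range N, ((zs k)⁻¹).re)) atTop atBot := by
      have h0 : Tendsto (fun N => δ * ∑ k ∈ Finset.range N, ((zs k)⁻¹).re) atTop atTop :=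
        hdiv.const_mul_atTop hδ
      exact tendsto_neg_atTop_atBot.comp h0
    have h2 := Real.tendsto_exp_atBot.comp h1
    have h3 := h2.const_mul (M ^ 2)
    simpa using h3
  have hle : ‖f z‖ ^ 2 ≤ 0 := ge_of_tendsto' hlim hNbound |>.trans_eq rfl
  have : ‖f z‖ = 0 := by nlinarith [norm_nonneg (f z), sq_nonneg (‖f z‖)]
  exact norm_eq_zero.1 this
end
end
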